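/- arXiv:2105.13356 — 3 statements merged into one kernel-verified Lean document; each statement's English description precedes it below -/
import Mathlib

section
/- Let A and B be n×n positive definite complex matrices, let 1 ≤ p ≤ 2, let r and s be real numbers of the same sign, and let t be real with (rp − r)/((r+s)p) ≤ t ≤ (rp + s)/((r+s)p). If A^{(r+s−1)/2} B A^{(r+s−1)/2} ≤ I_n (in the Loewner order), then (A♯_{s,1−t}B)^{p/2} (A♯_{r,t}B)^p (A♯_{s,1−t}B)^{p/2} ≤ I_n. -/
open Matrix Filter ComplexOrder

variable {n : ℕ}

/-- Real power of a (Hermitian) matrix, via the continuous functional calculus. -/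
noncomputable def Matrix.rpow (A : Matrix (Fin n) (Fin n) ℂ) (r : ℝ) : Matrix (Fin n) (Fin n) ℂ :=
  cfc (fun x : ℝ => x ^ r) A

/-- The weighted matrix geometric mean `A ♯_{r,t} B = A^{r/2} (A^{-1/2} B A^{-1/2})^t A^{r/2}`.
The usual weighted geometric mean `A ♯_t B` is `Matrix.sharp A B 1 t`. -/
noncomputable def Matrix.sharp (A B : Matrix (Fin n) (Fin n) ℂ) (r t : ℝ) :
    Matrix (Fin n) (Fin n) ℂ :=
  A.rpow (r / 2) * ((A.rpow (-(1 / 2)) * B * A.rpow (-(1 / 2))).rpow t) * A.rpow (r / 2)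

/-- The mean `A ♮♮ B = A^{1/2} (B^{1/2} A^{-1} B^{1/2})^{1/2} A^{1/2}`. -/
noncomputable def Matrix.natnat (A B : Matrix (Fin n) (Fin n) ℂ) : Matrix (Fin n) (Fin n) ℂ :=
  A.rpow (1 / 2) * ((B.rpow (1 / 2) * A.rpow (-1) * B.rpow (1 / 2)).rpow (1 / 2)) * A.rpow (1 / 2)

/-- The multiset of eigenvalues of a matrix (roots of the characteristic polynomial, with
algebraic multiplicity), viewed as real numbers via the real part (intended for matrices
whose eigenvalues are all real). -/
noncomputable def Matrix.realEigs (M : Matrix (Fin n) (Fin n) ℂ) : Multiset ℝ :=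
  M.charpoly.roots.map Complex.re

/-- The multiset of the moduli of the eigenvalues of a matrix. -/
noncomputable def Matrix.absEigs (M : Matrix (Fin n) (Fin n) ℂ) : Multiset ℝ :=
  M.charpoly.roots.map (fun z => ‖z‖)

/-- The multiset of singular values of a matrix `X`, i.e. the eigenvalues of `(Xᴴ X)^{1/2}`:
the square roots of the (real, nonnegative) eigenvalues of `Xᴴ * X`. -/
noncomputable def Matrix.singVals (X : Matrix (Fin n) (Fin n) ℂ) : Multiset ℝ :=
  (Xᴴ * X).charpoly.roots.map (fun z => Real.sqrt z.re)

/-- The product of the `k` largest elements of a multiset of reals. -/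
noncomputable def Multiset.prodKLargest (s : Multiset ℝ) (k : ℕ) : ℝ :=
  ((s.sort (· ≤ ·)).drop (s.card - k)).prod

/-- The sum of the `k` largest elements of a multiset of reals. -/
noncomputable def Multiset.sumKLargest (s : Multiset ℝ) (k : ℕ) : ℝ :=
  ((s.sort (· ≤ ·)).drop (s.card - k)).sum

/-- The `j`-th largest element (`j` being `0`-indexed, so `j = 0` gives the largest) of a
multiset of reals, when the multiset has `n` elements. -/
noncomputable def Multiset.kthLargest (s : Multiset ℝ) (n j : ℕ) : ℝ :=
  (s.sort (· ≤ ·)).getD (n - 1 - j) 0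

/-- `x ≺_log y` : `x` is (log-)majorized by `y` in the multiplicative sense: for every `k`,
the product of the `k` largest entries of `x` is at most that of `y`, with equality for the
product of all entries. -/
def LogMajorize (x y : Multiset ℝ) : Prop :=
  x.card = y.card ∧ (∀ k, x.prodKLargest k ≤ y.prodKLargest k) ∧ x.prod = y.prod

open Polynomial

namespace SA

variable {n : ℕ}

lemma spec_pos {A : Matrix (Fin n) (Fin n) ℂ} (hA : A.PosDef) : spectrum ℝ A ⊆ Set.Ioi 0 := by
  rw [hA.isHermitian.spectrum_real_eq_range_eigenvalues]
  rintro x ⟨i, rfl⟩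
  exact hA.eigenvalues_pos i

lemma contOn {A : Matrix (Fin n) (Fin n) ℂ} (hA : A.PosDef) (r : ℝ) :
    ContinuousOn (fun x : ℝ => x ^ r) (spectrum ℝ A) := by
  intro x hx
  exact (Real.continuousAt_rpow_const x r (Or.inl (ne_of_gt (spec_pos hA hx)))).continuousWithinAt

lemma rpow_isSelfAdjoint (A : Matrix (Fin n) (Fin n) ℂ) (r : ℝ) :
    IsSelfAdjoint (A.rpow r) := cfc_predicate _ A

lemma rpow_isHermitian (A : Matrix (Fin n) (Fin n) ℂ) (r : ℝ) :
    (A.rpow r).IsHermitian := rpow_isSelfAdjoint A r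

lemma rpow_mul_rpow {A : Matrix (Fin n) (Fin n) ℂ} (hA : A.PosDef) (x y : ℝ) :
    A.rpow x * A.rpow y = A.rpow (x + y) := by
  unfold Matrix.rpow
  rw [← cfc_mul _ _ A (contOn hA x) (contOn hA y)]
  apply cfc_congr
  intro t ht
  exact (Real.rpow_add (spec_pos hA ht) x y).symm

lemma rpow_rpow {A : Matrix (Fin n) (Fin n) ℂ} (hA : A.PosDef) (x y : ℝ) :
    (A.rpow x).rpow y = A.rpow (x * y) := by
  unfold Matrix.rpow
  rw [← cfc_comp' (fun t : ℝ => t ^ y) (fun t : ℝ => t ^ x) A ?hg (contOn hA x) hA.isHermitian.isSelfAdjoint]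
  · apply cfc_congr
    intro t ht
    exact (Real.rpow_mul (le_of_lt (spec_pos hA ht)) x y).symm
  case hg =>
    intro t ht
    obtain ⟨u, hu, rfl⟩ := ht
    exact (Real.continuousAt_rpow_const _ y
      (Or.inl (ne_of_gt (Real.rpow_pos_of_pos (spec_pos hA hu) x)))).continuousWithinAt

lemma rpow_one {A : Matrix (Fin n) (Fin n) ℂ} (hA : A.PosDef) : A.rpow 1 = A := by
  unfold Matrix.rpow
  have : (spectrum ℝ A).EqOn (fun x : ℝ => x ^ (1:ℝ)) (fun x => x) := by
    intro t _; simp [Real.rpow_one]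
  rw [cfc_congr this, cfc_id' ℝ A hA.isHermitian.isSelfAdjoint]

lemma rpow_zero {A : Matrix (Fin n) (Fin n) ℂ} (hA : A.PosDef) : A.rpow 0 = 1 := by
  unfold Matrix.rpow
  have : (spectrum ℝ A).EqOn (fun x : ℝ => x ^ (0:ℝ)) (fun _ => 1) := by
    intro t _; simp [Real.rpow_zero]
  rw [cfc_congr this, cfc_const_one ℝ A hA.isHermitian.isSelfAdjoint]

end SA

namespace SA2
open SA
variable {n : ℕ}

lemma posDef_conj {M T : Matrix (Fin n) (Fin n) ℂ} (hM : M.PosDef) (hT : IsUnit T) :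
    (T * M * Tᴴ).PosDef := by
  refine PosDef.of_dotProduct_mulVec_pos ?_ ?_
  · exact isHermitian_mul_mul_conjTranspose T hM.isHermitian
  · intro x hx
    have h1 : star x ⬝ᵥ (T * M * Tᴴ) *ᵥ x = star (Tᴴ *ᵥ x) ⬝ᵥ M *ᵥ (Tᴴ *ᵥ x) := by
      rw [star_mulVec, conjTranspose_conjTranspose, ← mulVec_mulVec, ← mulVec_mulVec,
        dotProduct_mulVec (star x)]
    rw [h1]
    apply hM.dotProduct_mulVec_pos
    intro hzero
    apply hx
    have hinj : Function.Injective (Tᴴ.mulVec) :=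
      Matrix.mulVec_injective_iff_isUnit.2 ((Matrix.isUnit_conjTranspose _).2 hT)
    have := hinj (show Tᴴ *ᵥ x = Tᴴ *ᵥ 0 by simpa [Matrix.mulVec_zero] using hzero)
    exact this

end SA2

namespace SA3
open SA SA2
variable {n : ℕ}

lemma unitary_isUnit {U : Matrix (Fin n) (Fin n) ℂ} (hU : U ∈ unitary (Matrix (Fin n) (Fin n) ℂ)) :
    IsUnit U :=
  ⟨⟨U, star U, Unitary.mul_star_self_of_mem hU, Unitary.star_mul_self_of_mem hU⟩, rfl⟩

lemma rpow_posDef {A : Matrix (Fin n) (Fin n) ℂ} (hA : A.PosDef) (r : ℝ) :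
    (A.rpow r).PosDef := by
  have hH := hA.isHermitian
  rw [Matrix.rpow, hH.cfc_eq, Matrix.IsHermitian.cfc]
  have hdiag : (diagonal (RCLike.ofReal ∘ (fun x : ℝ => x ^ r) ∘ hH.eigenvalues) :
      Matrix (Fin n) (Fin n) ℂ).PosDef := by
    rw [Matrix.posDef_diagonal_iff]
    intro i
    simp only [Function.comp_apply]
    rw [RCLike.ofReal_pos]
    exact Real.rpow_pos_of_pos (hA.eigenvalues_pos i) r
  have hU : IsUnit ((Matrix.IsHermitian.eigenvectorUnitary hH : Matrix (Fin n) (Fin n) ℂ)) :=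
    unitary_isUnit (SetLike.coe_mem _)
  simpa [Matrix.star_eq_conjTranspose] using posDef_conj hdiag hU

end SA3


namespace SA4
variable {n : ℕ}

/-- Loewner order -/
def loe (X Y : Matrix (Fin n) (Fin n) ℂ) : Prop := (Y - X).PosSemidef

lemma loe_refl (X : Matrix (Fin n) (Fin n) ℂ) : loe X X := by
  simp [loe, Matrix.PosSemidef.zero]

lemma loe_trans {X Y Z : Matrix (Fin n) (Fin n) ℂ} (h1 : loe X Y) (h2 : loe Y Z) : loe X Z := by
  have := h2.add h1
  simpa [loe, sub_add_sub_cancel] using this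

lemma loe_conj {X Y : Matrix (Fin n) (Fin n) ℂ} (h : loe X Y) (T : Matrix (Fin n) (Fin n) ℂ) :
    loe (T * X * Tᴴ) (T * Y * Tᴴ) := by
  have := h.mul_mul_conjTranspose_same T
  simpa [loe, Matrix.mul_sub, Matrix.sub_mul] using this

/-- squared euclidean norm of a complex vector -/
noncomputable def nsq (v : Fin n → ℂ) : ℝ := ∑ i, ‖v i‖ ^ 2

lemma nsq_nonneg (v : Fin n → ℂ) : 0 ≤ nsq v :=
  Finset.sum_nonneg fun i _ => by positivity

lemma dot_star_self (v : Fin n → ℂ) : star v ⬝ᵥ v = (nsq v : ℂ) := by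
  unfold nsq
  push_cast
  apply Finset.sum_congr rfl
  intro i _
  simp only [Pi.star_apply, RCLike.star_def]
  rw [Complex.conj_mul']

lemma nsq_pos_of_ne {v : Fin n → ℂ} (hv : v ≠ 0) : 0 < nsq v := by
  rcases (nsq_nonneg v).lt_or_eq with h | h
  · exact h
  · exfalso; apply hv
    have := (Finset.sum_eq_zero_iff_of_nonneg (fun i _ => by positivity)).mp h.symm
    funext i
    have := this i (Finset.mem_univ i)
    simpa using this

lemma nsq_smul_real (r : ℝ) (v : Fin n → ℂ) : nsq ((r : ℂ) • v) = r ^ 2 * nsq v := by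
  unfold nsq
  rw [Finset.mul_sum]
  apply Finset.sum_congr rfl
  intro i _
  simp [norm_smul, mul_pow]

end SA4

namespace SA5
open SA4
variable {n : ℕ}

lemma qf_conjTranspose_mul (Z : Matrix (Fin n) (Fin n) ℂ) (x : Fin n → ℂ) :
    star x ⬝ᵥ (Zᴴ * Z) *ᵥ x = (nsq (Z *ᵥ x) : ℂ) := by
  rw [← dot_star_self, ← mulVec_mulVec, dotProduct_mulVec, star_mulVec]

lemma loe_one_qf {M : Matrix (Fin n) (Fin n) ℂ} (h : loe M 1) (x : Fin n → ℂ) :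
    star x ⬝ᵥ M *ᵥ x ≤ (nsq x : ℂ) := by
  have := (posSemidef_iff_dotProduct_mulVec.mp h).2 x
  rw [Matrix.sub_mulVec, dotProduct_sub, Matrix.one_mulVec, dot_star_self] at this
  exact sub_nonneg.mp this

/-- contraction property: `ZᴴZ ≤ 1` implies `‖Zx‖ ≤ ‖x‖` for all `x`. -/
lemma contraction_of_loe {Z : Matrix (Fin n) (Fin n) ℂ} (h : loe (Zᴴ * Z) 1) (x : Fin n → ℂ) :
    nsq (Z *ᵥ x) ≤ nsq x := by
  have := loe_one_qf h x
  rw [qf_conjTranspose_mul] at this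
  exact_mod_cast this

lemma loe_of_contraction {Z : Matrix (Fin n) (Fin n) ℂ} (h : ∀ x, nsq (Z *ᵥ x) ≤ nsq x) :
    loe (Zᴴ * Z) 1 := by
  refine posSemidef_iff_dotProduct_mulVec.mpr ⟨?_, ?_⟩
  · exact Matrix.IsHermitian.sub (Matrix.isHermitian_one)
      (Matrix.posSemidef_conjTranspose_mul_self Z).1
  · intro x
    rw [Matrix.sub_mulVec, dotProduct_sub, Matrix.one_mulVec, dot_star_self,
      qf_conjTranspose_mul]
    have := h x
    rw [← Complex.ofReal_sub, Complex.zero_le_real]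
    linarith

/-- Cauchy-Schwarz for the complex dot product. -/
lemma cs_dot (x w : Fin n → ℂ) : ‖star x ⬝ᵥ w‖ ≤ Real.sqrt (nsq x) * Real.sqrt (nsq w) := by
  let x' : EuclideanSpace ℂ (Fin n) := (WithLp.equiv 2 _).symm x
  let w' : EuclideanSpace ℂ (Fin n) := (WithLp.equiv 2 _).symm w
  have h1 : inner ℂ x' w' = star x ⬝ᵥ w := by
    rw [EuclideanSpace.inner_eq_star_dotProduct]
    exact dotProduct_comm _ _
  have h2 : ‖x'‖ = Real.sqrt (nsq x) := by
    rw [EuclideanSpace.norm_eq]; rfl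
  have h3 : ‖w'‖ = Real.sqrt (nsq w) := by
    rw [EuclideanSpace.norm_eq]; rfl
  calc ‖star x ⬝ᵥ w‖ = ‖(inner ℂ x' w' : ℂ)‖ := by rw [h1]
    _ ≤ ‖x'‖ * ‖w'‖ := norm_inner_le_norm x' w'
    _ = _ := by rw [h2, h3]

/-- Key C*-type lemma: `ZᴴZ ≤ 1 → ZZᴴ ≤ 1`. -/
lemma loe_comm {Z : Matrix (Fin n) (Fin n) ℂ} (h : loe (Zᴴ * Z) 1) : loe (Z * Zᴴ) 1 := by
  have key : ∀ x, nsq (Zᴴ *ᵥ x) ≤ nsq x := by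
    intro x
    set u := Zᴴ *ᵥ x with hu
    by_cases h0 : u = 0
    · rw [h0]
      simpa [nsq] using nsq_nonneg x
    have h1 : star x ⬝ᵥ (Z *ᵥ u) = (nsq u : ℂ) := by
      have := qf_conjTranspose_mul Zᴴ x
      rw [Matrix.conjTranspose_conjTranspose] at this
      rw [hu, mulVec_mulVec]
      exact this
    have h2 : nsq (Z *ᵥ u) ≤ nsq u := contraction_of_loe h u
    have h3 : ‖star x ⬝ᵥ (Z *ᵥ u)‖ ≤ Real.sqrt (nsq x) * Real.sqrt (nsq (Z *ᵥ u)) := cs_dot _ _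
    rw [h1] at h3
    have h4 : ‖(nsq u : ℂ)‖ = nsq u := by
      rw [Complex.norm_real, Real.norm_eq_abs, abs_of_nonneg (nsq_nonneg u)]
    rw [h4] at h3
    have h5 : Real.sqrt (nsq (Z *ᵥ u)) ≤ Real.sqrt (nsq u) := Real.sqrt_le_sqrt h2
    have h6 : nsq u ≤ Real.sqrt (nsq x) * Real.sqrt (nsq u) := by
      calc nsq u ≤ Real.sqrt (nsq x) * Real.sqrt (nsq (Z *ᵥ u)) := h3
        _ ≤ Real.sqrt (nsq x) * Real.sqrt (nsq u) := by
            apply mul_le_mul_of_nonneg_left h5 (Real.sqrt_nonneg _)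
    have h7 : 0 < nsq u := nsq_pos_of_ne h0
    have h8 : Real.sqrt (nsq u) ≤ Real.sqrt (nsq x) := by
      have h9 : Real.sqrt (nsq u) * Real.sqrt (nsq u) = nsq u :=
        Real.mul_self_sqrt (le_of_lt h7)
      nlinarith [Real.sqrt_pos.mpr h7, Real.sqrt_nonneg (nsq x)]
    calc nsq u = Real.sqrt (nsq u) ^ 2 := (Real.sq_sqrt (le_of_lt h7)).symm
      _ ≤ Real.sqrt (nsq x) ^ 2 := by nlinarith [Real.sqrt_nonneg (nsq u), Real.sqrt_nonneg (nsq x)]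
      _ = nsq x := Real.sq_sqrt (nsq_nonneg x)
  have := loe_of_contraction key
  rwa [Matrix.conjTranspose_conjTranspose] at this

end SA5

namespace SA6
open SA4 SA5
variable {n : ℕ}

lemma nsq_smul_r (r : ℝ) (v : Fin n → ℂ) : nsq (r • v) = r ^ 2 * nsq v := by
  unfold nsq
  rw [Finset.mul_sum]
  apply Finset.sum_congr rfl
  intro i _
  have : (r • v) i = r • (v i) := rfl
  rw [this, norm_smul]
  simp [mul_pow, Real.norm_eq_abs, sq_abs]

lemma loe_one_of_eig {M : Matrix (Fin n) (Fin n) ℂ} (hM : M.IsHermitian)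
    (h : ∀ i, hM.eigenvalues i ≤ 1) : loe M 1 := by
  unfold loe
  set U : Matrix (Fin n) (Fin n) ℂ := (Matrix.IsHermitian.eigenvectorUnitary hM :
    Matrix (Fin n) (Fin n) ℂ) with hUdef
  set D : Matrix (Fin n) (Fin n) ℂ :=
    diagonal (RCLike.ofReal ∘ hM.eigenvalues) with hDdef
  have hU1 : U * star U = 1 := Unitary.coe_mul_star_self _
  have key : (1 : Matrix (Fin n) (Fin n) ℂ) - M = U * (1 - D) * star U := by
    rw [Matrix.mul_sub, Matrix.sub_mul, mul_one]
    rw [hU1]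
    congr 1
    exact hM.spectral_theorem
  rw [key]
  have hdiag : ((1 : Matrix (Fin n) (Fin n) ℂ) - D).PosSemidef := by
    rw [hDdef, ← Matrix.diagonal_one, Matrix.diagonal_sub]
    apply Matrix.PosSemidef.diagonal
    intro i
    simp only [Pi.one_apply, Function.comp_apply, Pi.sub_apply, Pi.zero_apply]
    rw [show ((1 : ℂ) - RCLike.ofReal (hM.eigenvalues i)) =
      RCLike.ofReal (1 - hM.eigenvalues i) by push_cast; ring]
    rw [RCLike.ofReal_nonneg]
    linarith [h i]
  have := hdiag.mul_mul_conjTranspose_same U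
  rwa [Matrix.star_eq_conjTranspose]

lemma eig_le_one_factored {M T T' E F : Matrix (Fin n) (Fin n) ℂ} (hM : M.IsHermitian)
    (hTT' : T * T' = 1) (hT'T : T' * T = 1) (hMf : M = T * (E * F) * T')
    (hE : ∀ x, nsq (E *ᵥ x) ≤ nsq x) (hF : ∀ x, nsq (F *ᵥ x) ≤ nsq x) :
    loe M 1 := by
  apply loe_one_of_eig hM
  intro i
  set lam := hM.eigenvalues i with hlam
  set v : Fin n → ℂ := ⇑(hM.eigenvectorBasis i) with hv
  have hMv : M *ᵥ v = lam • v := hM.mulVec_eigenvectorBasis i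
  have hnv : nsq v = 1 := by
    have h1 : ‖hM.eigenvectorBasis i‖ = 1 := hM.eigenvectorBasis.orthonormal.1 i
    rw [EuclideanSpace.norm_eq] at h1
    have h2 : Real.sqrt (nsq v) = 1 := h1
    have := congrArg (· ^ 2) h2
    simpa [Real.sq_sqrt (nsq_nonneg v)] using this
  set w := T' *ᵥ v with hw
  have hvw : T *ᵥ w = v := by
    rw [hw, mulVec_mulVec, hTT', Matrix.one_mulVec]
  have hw0 : w ≠ 0 := by
    intro h0
    have : v = 0 := by rw [← hvw, h0, Matrix.mulVec_zero]
    rw [this] at hnv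
    simp [nsq] at hnv
  have hEF : T' * M * T = E * F := by
    rw [hMf]
    have hassoc : T' * (T * (E * F) * T') * T = (T' * T) * (E * F) * (T' * T) := by
      noncomm_ring
    rw [hassoc, hT'T, Matrix.one_mul, Matrix.mul_one]
  have hEFw : (E * F) *ᵥ w = lam • w := by
    rw [← hEF, hw, mulVec_mulVec, Matrix.mul_assoc (T' * M), hTT', Matrix.mul_one,
      ← mulVec_mulVec, hMv, Matrix.mulVec_smul]
  have hchain : lam ^ 2 * nsq w ≤ nsq w := by
    calc lam ^ 2 * nsq w = nsq (lam • w) := (nsq_smul_r lam w).symm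
      _ = nsq ((E * F) *ᵥ w) := by rw [hEFw]
      _ = nsq (E *ᵥ (F *ᵥ w)) := by rw [← mulVec_mulVec]
      _ ≤ nsq (F *ᵥ w) := hE _
      _ ≤ nsq w := hF _
  have hnw : 0 < nsq w := nsq_pos_of_ne hw0
  nlinarith [sq_nonneg (lam - 1), sq_nonneg (lam + 1)]

end SA6


namespace SA7
variable {n : ℕ}

lemma aeval_semiconj {a x y : Matrix (Fin n) (Fin n) ℂ} (h : a * y = x * a) (q : ℝ[X]) :
    a * (Polynomial.aeval y q) = (Polynomial.aeval x q) * a := by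
  induction q using Polynomial.induction_on' with
  | add p r hp hr =>
    simp only [map_add, Matrix.mul_add, Matrix.add_mul, hp, hr]
  | monomial k c =>
    have hsc : SemiconjBy a y x := h
    have hk : a * y ^ k = x ^ k * a := (hsc.pow_right k).eq
    simp only [Polynomial.aeval_monomial, Algebra.algebraMap_eq_smul_one, smul_mul_assoc,
      one_mul, mul_smul_comm, hk]

lemma cfc_swap (f : ℝ → ℝ) (S : Matrix (Fin n) (Fin n) ℂ) :
    cfc f (S * Sᴴ) * S = S * cfc f (Sᴴ * S) := by
  have hP : IsSelfAdjoint (Sᴴ * S) := (Matrix.posSemidef_conjTranspose_mul_self S).1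
  have hQ : IsSelfAdjoint (S * Sᴴ) := (Matrix.posSemidef_self_mul_conjTranspose S).1
  have hfin : (spectrum ℝ (Sᴴ * S) ∪ spectrum ℝ (S * Sᴴ)).Finite :=
    (Matrix.finite_real_spectrum).union (Matrix.finite_real_spectrum)
  set s : Finset ℝ := hfin.toFinset with hs
  set q : ℝ[X] := Lagrange.interpolate s id f with hqdef
  have hinj : Set.InjOn id (s : Set ℝ) := Function.injective_id.injOn
  have hq : ∀ x ∈ spectrum ℝ (Sᴴ * S) ∪ spectrum ℝ (S * Sᴴ), q.eval x = f x := by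
    intro x hx
    have hxs : x ∈ s := by rw [hs]; simpa using hx
    simpa [hqdef] using Lagrange.eval_interpolate_at_node f hinj hxs
  have h1 : cfc f (Sᴴ * S) = Polynomial.aeval (Sᴴ * S) q := by
    rw [← cfc_polynomial q (Sᴴ * S) hP]
    exact cfc_congr fun x hx => (hq x (Or.inl hx)).symm
  have h2 : cfc f (S * Sᴴ) = Polynomial.aeval (S * Sᴴ) q := by
    rw [← cfc_polynomial q (S * Sᴴ) hQ]
    exact cfc_congr fun x hx => (hq x (Or.inr hx)).symm
  rw [h1, h2]
  exact (aeval_semiconj (by rw [Matrix.mul_assoc]) q).symm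

end SA7


namespace SA8
variable {n : ℕ}

lemma continuous_rpow_exp {A : Matrix (Fin n) (Fin n) ℂ} (hA : A.PosDef) :
    Continuous (fun θ : ℝ => A.rpow θ) := by
  have hH := hA.isHermitian
  have heq : (fun θ : ℝ => A.rpow θ) = fun θ =>
      (Matrix.IsHermitian.eigenvectorUnitary hH : Matrix (Fin n) (Fin n) ℂ) *
        diagonal (RCLike.ofReal ∘ (fun x : ℝ => x ^ θ) ∘ hH.eigenvalues) *
        star (Matrix.IsHermitian.eigenvectorUnitary hH : Matrix (Fin n) (Fin n) ℂ) := by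
    funext θ
    rw [Matrix.rpow, hH.cfc_eq, Matrix.IsHermitian.cfc]
    rfl
  rw [heq]
  apply Continuous.matrix_mul
  apply Continuous.matrix_mul continuous_const
  · apply Continuous.matrix_diagonal
    apply continuous_pi
    intro i
    simp only [Function.comp_apply]
    have : (fun θ : ℝ => (RCLike.ofReal (hH.eigenvalues i ^ θ) : ℂ)) =
        fun θ : ℝ => (RCLike.ofReal (Real.exp (Real.log (hH.eigenvalues i) * θ)) : ℂ) := by
      funext θ
      rw [Real.rpow_def_of_pos (hA.eigenvalues_pos i)]
    rw [this]
    exact Complex.continuous_ofReal.comp (Real.continuous_exp.comp (continuous_mul_left _))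
  · exact continuous_const

lemma isClosed_posSemidef : IsClosed {M : Matrix (Fin n) (Fin n) ℂ | M.PosSemidef} := by
  have : {M : Matrix (Fin n) (Fin n) ℂ | M.PosSemidef} =
      {M : Matrix (Fin n) (Fin n) ℂ | Mᴴ = M} ∩
        ⋂ x : Fin n → ℂ, {M | 0 ≤ star x ⬝ᵥ M *ᵥ x} := by
    ext M
    simp only [Set.mem_setOf_eq, Set.mem_inter_iff, Set.mem_iInter]
    exact posSemidef_iff_dotProduct_mulVec
  rw [this]
  apply IsClosed.inter
  · exact isClosed_eq (continuous_id.matrix_conjTranspose) continuous_id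
  · apply isClosed_iInter
    intro x
    have hcont : Continuous (fun M : Matrix (Fin n) (Fin n) ℂ => star x ⬝ᵥ M *ᵥ x) :=
      (continuous_const).dotProduct (continuous_id.matrix_mulVec continuous_const)
    have hclosed : IsClosed {z : ℂ | 0 ≤ z} := by
      have : {z : ℂ | 0 ≤ z} = Complex.re ⁻¹' (Set.Ici 0) ∩ Complex.im ⁻¹' {0} := by
        ext z
        simp only [Set.mem_setOf_eq, Set.mem_inter_iff, Set.mem_preimage, Set.mem_Ici,
          Set.mem_singleton_iff]
        rw [Complex.le_def]
        simp [eq_comm]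
      rw [this]
      exact (isClosed_Ici.preimage Complex.continuous_re).inter
        (isClosed_singleton.preimage Complex.continuous_im)
    exact hclosed.preimage hcont

lemma dyadic_subset {s : Set ℝ} (hcl : IsClosed s) (h0 : (0:ℝ) ∈ s) (h1 : (1:ℝ) ∈ s)
    (hmid : ∀ x ∈ s, ∀ y ∈ s, (x + y) / 2 ∈ s) : Set.Icc (0:ℝ) 1 ⊆ s := by
  have step : ∀ k j : ℕ, j ≤ 2 ^ k → ((j : ℝ) / 2 ^ k) ∈ s := by
    intro k
    induction k with
    | zero =>
      intro j hj
      interval_cases j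
      · simpa using h0
      · simpa using h1
    | succ k ih =>
      intro j hj
      rcases Nat.even_or_odd j with ⟨m, hm⟩ | ⟨m, hm⟩
      · subst hm
        have hm2 : m ≤ 2 ^ k := by omega
        have := ih m hm2
        have heq : ((m + m : ℕ) : ℝ) / 2 ^ (k + 1) = (m : ℝ) / 2 ^ k := by
          push_cast
          ring
        rwa [heq]
      · subst hm
        have hm1 : m ≤ 2 ^ k := by omega
        have hm2 : m + 1 ≤ 2 ^ k := by omega
        have hx := ih m hm1
        have hy := ih (m + 1) hm2
        have := hmid _ hx _ hy
        have heq : ((m : ℝ) / 2 ^ k + ((m + 1 : ℕ) : ℝ) / 2 ^ k) / 2 =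
            ((2 * m + 1 : ℕ) : ℝ) / 2 ^ (k + 1) := by
          push_cast
          ring
        rwa [heq] at this
  intro θ hθ
  obtain ⟨hθ0, hθ1⟩ := hθ
  have hmem : ∀ k : ℕ, ((⌊θ * 2 ^ k⌋₊ : ℝ) / 2 ^ k) ∈ s := by
    intro k
    apply step
    have h2k : (0:ℝ) < 2 ^ k := by positivity
    have : θ * 2 ^ k ≤ (2 : ℝ) ^ k := by nlinarith
    calc ⌊θ * 2 ^ k⌋₊ ≤ ⌊((2:ℝ) ^ k)⌋₊ := Nat.floor_mono this
      _ = 2 ^ k := by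
          rw [show ((2:ℝ) ^ k) = ((2 ^ k : ℕ) : ℝ) by push_cast; ring, Nat.floor_natCast]
  have htend : Tendsto (fun k : ℕ => ((⌊θ * 2 ^ k⌋₊ : ℝ) / 2 ^ k)) atTop (nhds θ) := by
    refine tendsto_of_tendsto_of_tendsto_of_le_of_le
      (g := fun k : ℕ => θ - (1/2 : ℝ) ^ k) (h := fun _ : ℕ => θ) ?_ ?_ ?_ ?_
    · have : Tendsto (fun k : ℕ => ((1:ℝ)/2) ^ k) atTop (nhds 0) := by
        apply tendsto_pow_atTop_nhds_zero_of_lt_one <;> norm_num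
      have := (tendsto_const_nhds (x := θ) (f := atTop (α := ℕ))).sub this
      simpa using this
    · exact tendsto_const_nhds
    · intro k
      have h2k : (0:ℝ) < 2 ^ k := by positivity
      have hfl : θ * 2 ^ k - 1 < (⌊θ * 2 ^ k⌋₊ : ℝ) := by
        have := Nat.sub_one_lt_floor (θ * 2 ^ k)
        linarith
      show θ - (1/2 : ℝ) ^ k ≤ (⌊θ * 2 ^ k⌋₊ : ℝ) / 2 ^ k
      rw [sub_le_iff_le_add, div_add' _ _ _ (ne_of_gt h2k), le_div_iff₀ h2k]
      have hpow : (1/2 : ℝ) ^ k * 2 ^ k = 1 := by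
        rw [div_pow]
        field_simp
        exact one_pow k
      nlinarith [hfl]
    · intro k
      have h2k : (0:ℝ) < 2 ^ k := by positivity
      show (⌊θ * 2 ^ k⌋₊ : ℝ) / 2 ^ k ≤ θ
      rw [div_le_iff₀ h2k]
      exact Nat.floor_le (by positivity)
  exact hcl.mem_of_tendsto htend (Eventually.of_forall hmem)

end SA8



namespace SA9
open SA SA2 SA3 SA4 SA5 SA6 SA7 SA8
variable {n : ℕ}

/-- collapse adjacent rpow factors (left-assoc tail) -/
lemma rpcol {A : Matrix (Fin n) (Fin n) ℂ} (hA : A.PosDef) (a b : ℝ)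
    (M : Matrix (Fin n) (Fin n) ℂ) :
    A.rpow a * (A.rpow b * M) = A.rpow (a + b) * M := by
  rw [← Matrix.mul_assoc, rpow_mul_rpow hA]

lemma rpcol' {A : Matrix (Fin n) (Fin n) ℂ} (hA : A.PosDef) (a b : ℝ) :
    A.rpow a * A.rpow b = A.rpow (a + b) := rpow_mul_rpow hA a b

lemma rpow_herm_ct (A : Matrix (Fin n) (Fin n) ℂ) (r : ℝ) : (A.rpow r)ᴴ = A.rpow r :=
  rpow_isHermitian A r

/-- conjugation by a Hermitian rpow on both sides -/
lemma loe_conj_rpow {X Y A : Matrix (Fin n) (Fin n) ℂ} (h : loe X Y) (r : ℝ) :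
    loe (A.rpow r * X * A.rpow r) (A.rpow r * Y * A.rpow r) := by
  have := loe_conj h (A.rpow r)
  rwa [rpow_herm_ct] at this

lemma loe_inv {A B : Matrix (Fin n) (Fin n) ℂ} (hA : A.PosDef) (hB : B.PosDef) (h : loe A B) :
    loe (B.rpow (-1)) (A.rpow (-1)) := by
  set Z := A.rpow (1/2) * B.rpow (-(1/2)) with hZ
  have hZc : Zᴴ = B.rpow (-(1/2)) * A.rpow (1/2) := by
    rw [hZ, Matrix.conjTranspose_mul, rpow_herm_ct, rpow_herm_ct]
  have h1 : loe (Zᴴ * Z) 1 := by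
    have h2 := loe_conj_rpow (A := B) h (-(1/2))
    have e1 : B.rpow (-(1/2)) * B * B.rpow (-(1/2)) = 1 := by
      calc B.rpow (-(1/2)) * B * B.rpow (-(1/2))
          = B.rpow (-(1/2)) * B.rpow 1 * B.rpow (-(1/2)) := by rw [rpow_one hB]
        _ = B.rpow (-(1/2) + 1 + -(1/2)) := by rw [rpcol' hB, rpcol' hB]
        _ = 1 := by rw [show (-(1/2) + 1 + -(1/2) : ℝ) = 0 by norm_num, rpow_zero hB]
    have e2 : Zᴴ * Z = B.rpow (-(1/2)) * A * B.rpow (-(1/2)) := by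
      rw [hZc, hZ]
      calc B.rpow (-(1/2)) * A.rpow (1/2) * (A.rpow (1/2) * B.rpow (-(1/2)))
          = B.rpow (-(1/2)) * (A.rpow (1/2) * A.rpow (1/2)) * B.rpow (-(1/2)) := by
            noncomm_ring
        _ = B.rpow (-(1/2)) * A * B.rpow (-(1/2)) := by
            rw [rpcol' hA, show (1/2 + 1/2 : ℝ) = 1 by norm_num, rpow_one hA]
    rw [e2]
    rwa [e1] at h2
  have h3 := loe_comm h1
  have e3 : Z * Zᴴ = A.rpow (1/2) * B.rpow (-1) * A.rpow (1/2) := by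
    rw [hZc, hZ]
    calc A.rpow (1/2) * B.rpow (-(1/2)) * (B.rpow (-(1/2)) * A.rpow (1/2))
        = A.rpow (1/2) * (B.rpow (-(1/2)) * B.rpow (-(1/2))) * A.rpow (1/2) := by
          noncomm_ring
      _ = A.rpow (1/2) * B.rpow (-1) * A.rpow (1/2) := by
          rw [rpcol' hB, show (-(1/2) + -(1/2) : ℝ) = -1 by norm_num]
  rw [e3] at h3
  have h4 := loe_conj_rpow (A := A) h3 (-(1/2))
  have e4 : A.rpow (-(1/2)) * (A.rpow (1/2) * B.rpow (-1) * A.rpow (1/2)) * A.rpow (-(1/2)) =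
      B.rpow (-1) := by
    have hre : A.rpow (-(1/2)) * (A.rpow (1/2) * B.rpow (-1) * A.rpow (1/2)) * A.rpow (-(1/2)) =
        (A.rpow (-(1/2)) * A.rpow (1/2)) * B.rpow (-1) * (A.rpow (1/2) * A.rpow (-(1/2))) := by
      noncomm_ring
    rw [hre, rpcol' hA, rpcol' hA, show (-(1/2) + 1/2 : ℝ) = 0 by norm_num,
      show (1/2 + -(1/2) : ℝ) = 0 by norm_num, rpow_zero hA, Matrix.one_mul, Matrix.mul_one]
  have e5 : A.rpow (-(1/2)) * 1 * A.rpow (-(1/2)) = A.rpow (-1) := by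
    rw [Matrix.mul_one, rpcol' hA, show (-(1/2) + -(1/2) : ℝ) = -1 by norm_num]
  rwa [e4, e5] at h4

end SA9



namespace SA10
open SA SA2 SA3 SA4 SA5 SA6 SA7 SA8 SA9
variable {n : ℕ}

theorem loewner_heinz {A B : Matrix (Fin n) (Fin n) ℂ} (hA : A.PosDef) (hB : B.PosDef)
    (h : loe A B) {θ : ℝ} (hθ : θ ∈ Set.Icc (0:ℝ) 1) : loe (A.rpow θ) (B.rpow θ) := by
  set s : Set ℝ := {θ : ℝ | loe (A.rpow θ) (B.rpow θ)} with hs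
  suffices hsub : Set.Icc (0:ℝ) 1 ⊆ s from hsub hθ
  apply dyadic_subset
  · have : s = (fun θ : ℝ => B.rpow θ - A.rpow θ) ⁻¹' {M | M.PosSemidef} := rfl
    rw [this]
    exact isClosed_posSemidef.preimage ((continuous_rpow_exp hB).sub (continuous_rpow_exp hA))
  · show loe (A.rpow 0) (B.rpow 0)
    rw [rpow_zero hA, rpow_zero hB]
    exact loe_refl 1
  · show loe (A.rpow 1) (B.rpow 1)
    rwa [rpow_one hA, rpow_one hB]
  · intro x hx y hy
    show loe (A.rpow ((x + y)/2)) (B.rpow ((x + y)/2))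
    have hxs : loe (A.rpow x) (B.rpow x) := hx
    have hys : loe (A.rpow y) (B.rpow y) := hy
    set E := B.rpow (-(y/2)) * A.rpow (y/2) with hEdef
    set F := A.rpow (x/2) * B.rpow (-(x/2)) with hFdef
    -- E is a contraction
    have hEloe : loe (Eᴴ * E) 1 := by
      have hinv := loe_inv (rpow_posDef hA y) (rpow_posDef hB y) hys
      rw [rpow_rpow hB, rpow_rpow hA] at hinv
      have hconj := loe_conj_rpow (A := A) hinv (y/2)
      have eL : A.rpow (y/2) * B.rpow (y * -1) * A.rpow (y/2) = Eᴴ * E := by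
        rw [hEdef, Matrix.conjTranspose_mul, rpow_herm_ct, rpow_herm_ct]
        have : A.rpow (y/2) * B.rpow (-(y/2)) * (B.rpow (-(y/2)) * A.rpow (y/2)) =
            A.rpow (y/2) * (B.rpow (-(y/2)) * B.rpow (-(y/2))) * A.rpow (y/2) := by
          noncomm_ring
        rw [this, rpcol' hB, show (-(y/2) + -(y/2) : ℝ) = y * -1 by ring]
      have eR : A.rpow (y/2) * A.rpow (y * -1) * A.rpow (y/2) = 1 := by
        rw [rpcol' hA, rpcol' hA, show (y/2 + y * -1 + y/2 : ℝ) = 0 by ring, rpow_zero hA]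
      rw [eL, eR] at hconj
      exact hconj
    -- F is a contraction
    have hFloe : loe (Fᴴ * F) 1 := by
      have hconj := loe_conj_rpow (A := B) hxs (-(x/2))
      have eL : B.rpow (-(x/2)) * A.rpow x * B.rpow (-(x/2)) = Fᴴ * F := by
        rw [hFdef, Matrix.conjTranspose_mul, rpow_herm_ct, rpow_herm_ct]
        have : B.rpow (-(x/2)) * A.rpow (x/2) * (A.rpow (x/2) * B.rpow (-(x/2))) =
            B.rpow (-(x/2)) * (A.rpow (x/2) * A.rpow (x/2)) * B.rpow (-(x/2)) := by
          noncomm_ring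
        rw [this, rpcol' hA, show (x/2 + x/2 : ℝ) = x by ring]
      have eR : B.rpow (-(x/2)) * B.rpow x * B.rpow (-(x/2)) = 1 := by
        rw [rpcol' hB, rpcol' hB, show (-(x/2) + x + -(x/2) : ℝ) = 0 by ring, rpow_zero hB]
      rw [eL, eR] at hconj
      exact hconj
    -- the sandwiched matrix
    set M := B.rpow (-((x + y)/4)) * A.rpow ((x + y)/2) * B.rpow (-((x + y)/4)) with hMdef
    have hMherm : M.IsHermitian := by
      have := isHermitian_mul_mul_conjTranspose (B.rpow (-((x + y)/4)))
        (rpow_isHermitian A ((x + y)/2))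
      rwa [rpow_herm_ct] at this
    have hTT' : B.rpow ((y - x)/4) * B.rpow (-((y - x)/4)) = 1 := by
      rw [rpcol' hB, show ((y - x)/4 + -((y - x)/4) : ℝ) = 0 by ring, rpow_zero hB]
    have hT'T : B.rpow (-((y - x)/4)) * B.rpow ((y - x)/4) = 1 := by
      rw [rpcol' hB, show (-((y - x)/4) + (y - x)/4 : ℝ) = 0 by ring, rpow_zero hB]
    have hfact : M = B.rpow ((y - x)/4) * (E * F) * B.rpow (-((y - x)/4)) := by
      rw [hMdef, hEdef, hFdef]
      have : B.rpow ((y - x)/4) * (B.rpow (-(y/2)) * A.rpow (y/2) *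
          (A.rpow (x/2) * B.rpow (-(x/2)))) * B.rpow (-((y - x)/4)) =
          (B.rpow ((y - x)/4) * B.rpow (-(y/2))) * (A.rpow (y/2) * A.rpow (x/2)) *
          (B.rpow (-(x/2)) * B.rpow (-((y - x)/4))) := by
        noncomm_ring
      rw [this, rpcol' hB, rpcol' hA, rpcol' hB,
        show ((y - x)/4 + -(y/2) : ℝ) = -((x + y)/4) by ring,
        show (y/2 + x/2 : ℝ) = (x + y)/2 by ring,
        show (-(x/2) + -((y - x)/4) : ℝ) = -((x + y)/4) by ring]
    have hMloe : loe M 1 := eig_le_one_factored hMherm hTT' hT'T hfact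
      (contraction_of_loe hEloe) (contraction_of_loe hFloe)
    have hconj := loe_conj_rpow (A := B) hMloe ((x + y)/4)
    have eL : B.rpow ((x + y)/4) * M * B.rpow ((x + y)/4) = A.rpow ((x + y)/2) := by
      rw [hMdef]
      have : B.rpow ((x + y)/4) * (B.rpow (-((x + y)/4)) * A.rpow ((x + y)/2) *
          B.rpow (-((x + y)/4))) * B.rpow ((x + y)/4) =
          (B.rpow ((x + y)/4) * B.rpow (-((x + y)/4))) * A.rpow ((x + y)/2) *
          (B.rpow (-((x + y)/4)) * B.rpow ((x + y)/4)) := by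
        noncomm_ring
      rw [this, rpcol' hB, rpcol' hB, show ((x + y)/4 + -((x + y)/4) : ℝ) = 0 by ring,
        show (-((x + y)/4) + (x + y)/4 : ℝ) = 0 by ring, rpow_zero hB,
        Matrix.one_mul, Matrix.mul_one]
    have eR : B.rpow ((x + y)/4) * 1 * B.rpow ((x + y)/4) = B.rpow ((x + y)/2) := by
      rw [Matrix.mul_one, rpcol' hB, show ((x + y)/4 + (x + y)/4 : ℝ) = (x + y)/2 by ring]
    rwa [eL, eR] at hconj

end SA10



namespace SA11
open SA SA2 SA3 SA4 SA5 SA6 SA7 SA8 SA9 SA10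
variable {n : ℕ}

/-- The key one-sided estimate: if `C ≤ A^{-α}` then
`(A^{r/2} C^u A^{r/2})^p ≤ A^{(r - α u) p}`, provided `r/α ∈ [0,1]`, `p - 1 ∈ [0,1]` and
`γ = u p - (p-1) r/α ∈ [0,1]`. -/
theorem main_L {A C : Matrix (Fin n) (Fin n) ℂ} (hA : A.PosDef) (hC : C.PosDef)
    {α r p u : ℝ} (hα : α ≠ 0) (hrα : r/α ∈ Set.Icc (0:ℝ) 1) (hp : p - 1 ∈ Set.Icc (0:ℝ) 1)
    (hγ : u * p - (p - 1) * (r/α) ∈ Set.Icc (0:ℝ) 1)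
    (hCA : loe C (A.rpow (-α))) :
    loe ((A.rpow (r/2) * C.rpow u * A.rpow (r/2)).rpow p) (A.rpow ((r - α * u) * p)) := by
  set γ : ℝ := u * p - (p - 1) * (r/α) with hγdef
  set Ar2 := A.rpow (r/2) with hAr2
  set Cu2 := C.rpow (u/2) with hCu2
  set S := Ar2 * Cu2 with hS
  have hSc : Sᴴ = Cu2 * Ar2 := by
    rw [hS, Matrix.conjTranspose_mul, hAr2, hCu2, rpow_herm_ct, rpow_herm_ct]
  have hXeq : S * Sᴴ = Ar2 * C.rpow u * Ar2 := by
    rw [hSc, hS]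
    have : Ar2 * Cu2 * (Cu2 * Ar2) = Ar2 * (Cu2 * Cu2) * Ar2 := by noncomm_ring
    rw [this, hCu2, rpcol' hC, show (u/2 + u/2 : ℝ) = u by ring]
  have hXteq : Sᴴ * S = Cu2 * A.rpow r * Cu2 := by
    rw [hSc, hS]
    have : Cu2 * Ar2 * (Ar2 * Cu2) = Cu2 * (Ar2 * Ar2) * Cu2 := by noncomm_ring
    rw [this, hAr2, rpcol' hA, show (r/2 + r/2 : ℝ) = r by ring]
  have hXpos : (S * Sᴴ).PosDef := by
    rw [hXeq]
    have := posDef_conj (rpow_posDef hC u) (rpow_posDef hA (r/2)).isUnit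
    rwa [← hAr2, rpow_herm_ct] at this
  have hXtpos : (Sᴴ * S).PosDef := by
    rw [hXteq]
    have := posDef_conj (rpow_posDef hA r) (rpow_posDef hC (u/2)).isUnit
    rwa [← hCu2, rpow_herm_ct] at this
  -- Step A : A^r ≤ C^{-(r/α)}
  have hstepA : loe (A.rpow r) (C.rpow (-(r/α))) := by
    have h1 := loe_inv hC (rpow_posDef hA (-α)) hCA
    rw [rpow_rpow hA] at h1
    have h2 := loewner_heinz (rpow_posDef hA (-α * -1)) (rpow_posDef hC (-1)) h1 hrα
    rw [rpow_rpow hA, rpow_rpow hC, show (-α * -1 * (r/α) : ℝ) = r by field_simp,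
      show ((-1 : ℝ) * (r/α)) = -(r/α) by ring] at h2
    exact h2
  -- Step B : Sᴴ S ≤ C^{u - r/α}
  have hstepB : loe (Sᴴ * S) (C.rpow (u - r/α)) := by
    have h3 := loe_conj_rpow (A := C) hstepA (u/2)
    rw [← hCu2] at h3
    have eR : Cu2 * C.rpow (-(r/α)) * Cu2 = C.rpow (u - r/α) := by
      rw [hCu2, rpcol' hC, rpcol' hC, show (u/2 + -(r/α) + u/2 : ℝ) = u - r/α by ring]
    rw [eR] at h3
    rwa [hXteq]
  -- Step C : (Sᴴ S)^{p-1} ≤ C^{(u - r/α)(p-1)}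
  have hstepC : loe ((Sᴴ * S).rpow (p - 1)) (C.rpow ((u - r/α) * (p - 1))) := by
    have h4 := loewner_heinz hXtpos (rpow_posDef hC (u - r/α)) hstepB hp
    rwa [rpow_rpow hC] at h4
  -- Step D : (S Sᴴ)^p ≤ A^{r/2} C^γ A^{r/2}
  have hswap : (S * Sᴴ).rpow (p - 1) * S = S * (Sᴴ * S).rpow (p - 1) :=
    cfc_swap (fun x : ℝ => x ^ (p - 1)) S
  have hXp : (S * Sᴴ).rpow p = S * (Sᴴ * S).rpow (p - 1) * Sᴴ := by
    have h5 : (S * Sᴴ).rpow (p - 1) * (S * Sᴴ) = (S * Sᴴ).rpow p := by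
      have hh := rpow_mul_rpow hXpos (p - 1) 1
      rw [rpow_one hXpos, show (p - 1 + 1 : ℝ) = p by ring] at hh
      exact hh
    rw [← h5, ← Matrix.mul_assoc, hswap]
  have hstepD : loe ((S * Sᴴ).rpow p) (Ar2 * C.rpow γ * Ar2) := by
    rw [hXp]
    have h6 := loe_conj hstepC S
    have eR : S * C.rpow ((u - r/α) * (p - 1)) * Sᴴ = Ar2 * C.rpow γ * Ar2 := by
      rw [hS, hSc]
      have : Ar2 * Cu2 * C.rpow ((u - r/α) * (p - 1)) * (Cu2 * Ar2) =
          Ar2 * (Cu2 * (C.rpow ((u - r/α) * (p - 1)) * Cu2)) * Ar2 := by noncomm_ring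
      rw [this, hCu2, ← Matrix.mul_assoc (C.rpow (u/2)), rpcol' hC, Matrix.mul_assoc,
        rpcol' hC]
      rw [show (u/2 + (u - r/α) * (p - 1) + u/2 : ℝ) = γ by rw [hγdef]; ring,
        ← Matrix.mul_assoc]
    rwa [eR] at h6
  -- Step E : A^{r/2} C^γ A^{r/2} ≤ A^{(r - α u) p}
  have hstepE : loe (Ar2 * C.rpow γ * Ar2) (A.rpow ((r - α * u) * p)) := by
    have h7 := loewner_heinz hC (rpow_posDef hA (-α)) hCA hγ
    rw [rpow_rpow hA] at h7
    have h8 := loe_conj_rpow (A := A) h7 (r/2)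
    rw [← hAr2] at h8
    have eR : Ar2 * A.rpow (-α * γ) * Ar2 = A.rpow ((r - α * u) * p) := by
      have harg : (r/2 + -α * γ + r/2 : ℝ) = (r - α * u) * p := by
        rw [hγdef]
        field_simp
        ring
      rw [hAr2, rpcol' hA, rpcol' hA, harg]
    rwa [eR] at h8
  rw [hXeq] at hstepD
  exact loe_trans hstepD hstepE

end SA11



section FinalAux
open SA SA2 SA4 SA5 SA9 SA10 SA11

lemma ratio_mem {a b : ℝ} (h : (0 < a ∧ 0 < b) ∨ (a < 0 ∧ b < 0)) :
    a / (a + b) ∈ Set.Icc (0:ℝ) 1 := by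
  rcases h with ⟨ha, hb⟩ | ⟨ha, hb⟩
  · exact ⟨div_nonneg ha.le (by linarith), (div_le_one (by linarith)).mpr (by linarith)⟩
  · rw [show a / (a + b) = -a / -(a + b) by rw [neg_div_neg_eq]]
    exact ⟨div_nonneg (by linarith) (by linarith),
      (div_le_one (by linarith)).mpr (by linarith)⟩

end FinalAux

open SA SA2 SA3 SA4 SA5 SA6 SA7 SA8 SA9 SA10 SA11 in
/-- The key implication (2.5) in the proof of Theorem 2.1: under the hypotheses of that theorem,
`A^{(r+s-1)/2} B A^{(r+s-1)/2} ≤ I` implies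
`(A♯_{s,1-t}B)^{p/2} (A♯_{r,t}B)^p (A♯_{s,1-t}B)^{p/2} ≤ I` in the Loewner order. -/
theorem stmt_5 (A B : Matrix (Fin n) (Fin n) ℂ) (hA : A.PosDef) (hB : B.PosDef)
    (p r s t : ℝ) (hp1 : 1 ≤ p) (hp2 : p ≤ 2)
    (hrs : (0 < r ∧ 0 < s) ∨ (r < 0 ∧ s < 0))
    (ht1 : (r * p - r) / ((r + s) * p) ≤ t) (ht2 : t ≤ (r * p + s) / ((r + s) * p))
    (h : ((1 : Matrix (Fin n) (Fin n) ℂ) -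
        A.rpow ((r + s - 1) / 2) * B * A.rpow ((r + s - 1) / 2)).PosSemidef) :
    ((1 : Matrix (Fin n) (Fin n) ℂ) -
        (A.sharp B s (1 - t)).rpow (p / 2) * (A.sharp B r t).rpow p *
          (A.sharp B s (1 - t)).rpow (p / 2)).PosSemidef := by
  have hα : r + s ≠ 0 := by rcases hrs with ⟨h1, h2⟩ | ⟨h1, h2⟩ <;> intro hc <;> linarith
  set C := A.rpow (-(1 / 2)) * B * A.rpow (-(1 / 2)) with hCdef
  have hC : C.PosDef := by
    have := posDef_conj hB (rpow_posDef hA (-(1/2))).isUnit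
    rwa [rpow_herm_ct] at this
  -- the hypothesis in Loewner form
  have hCA : loe C (A.rpow (-(r + s))) := by
    have h0 : loe (A.rpow ((r + s - 1) / 2) * B * A.rpow ((r + s - 1) / 2)) 1 := h
    have hconj := loe_conj_rpow (A := A) h0 (-((r + s)/2))
    have eL : A.rpow (-((r + s)/2)) * (A.rpow ((r + s - 1) / 2) * B * A.rpow ((r + s - 1) / 2)) *
        A.rpow (-((r + s)/2)) = C := by
      have hre : A.rpow (-((r + s)/2)) * (A.rpow ((r + s - 1) / 2) * B *
          A.rpow ((r + s - 1) / 2)) * A.rpow (-((r + s)/2)) =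
          (A.rpow (-((r + s)/2)) * A.rpow ((r + s - 1) / 2)) * B *
          (A.rpow ((r + s - 1) / 2) * A.rpow (-((r + s)/2))) := by noncomm_ring
      rw [hre, rpcol' hA, rpcol' hA, show (-((r + s)/2) + (r + s - 1) / 2 : ℝ) = -(1/2) by ring,
        show ((r + s - 1) / 2 + -((r + s)/2) : ℝ) = -(1/2) by ring, hCdef]
    have eR : A.rpow (-((r + s)/2)) * 1 * A.rpow (-((r + s)/2)) = A.rpow (-(r + s)) := by
      rw [Matrix.mul_one, rpcol' hA, show (-((r + s)/2) + -((r + s)/2) : ℝ) = -(r + s) by ring]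
    rwa [eL, eR] at hconj
  -- arithmetic facts
  have hp' : p - 1 ∈ Set.Icc (0:ℝ) 1 := ⟨by linarith, by linarith⟩
  have hrα1 : r / (r + s) ∈ Set.Icc (0:ℝ) 1 := ratio_mem hrs
  have hsα : s / (r + s) ∈ Set.Icc (0:ℝ) 1 := by
    rw [show r + s = s + r by ring]
    apply ratio_mem
    tauto
  have hγ1 : t * p - (p - 1) * (r / (r + s)) ∈ Set.Icc (0:ℝ) 1 := by
    have key : t * p - (p - 1) * (r / (r + s)) = (t * ((r + s) * p) - (p - 1) * r) / (r + s) := by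
      field_simp
    rw [key]
    rcases hrs with ⟨h1, h2⟩ | ⟨h1, h2⟩
    · have hαp : (0:ℝ) < (r + s) * p := by nlinarith
      have hb1 : r * p - r ≤ t * ((r + s) * p) := by
        have := (div_le_iff₀ hαp).mp ht1
        linarith
      have hb2 : t * ((r + s) * p) ≤ r * p + s := by
        have := (le_div_iff₀ hαp).mp ht2
        linarith
      exact ⟨div_nonneg (by linarith) (by linarith), (div_le_one (by linarith)).mpr (by linarith)⟩
    · have hαp : (r + s) * p < 0 := by nlinarith
      have hb1 : t * ((r + s) * p) ≤ r * p - r := by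
        have := (div_le_iff_of_neg hαp).mp ht1
        linarith
      have hb2 : r * p + s ≤ t * ((r + s) * p) := by
        have := (le_div_iff_of_neg hαp).mp ht2
        linarith
      rw [show (t * ((r + s) * p) - (p - 1) * r) / (r + s) =
        -(t * ((r + s) * p) - (p - 1) * r) / -(r + s) by rw [neg_div_neg_eq]]
      exact ⟨div_nonneg (by linarith) (by linarith), (div_le_one (by linarith)).mpr (by linarith)⟩
  have hγ2 : (1 - t) * p - (p - 1) * (s / (r + s)) ∈ Set.Icc (0:ℝ) 1 := by
    have key : (1 - t) * p - (p - 1) * (s / (r + s)) =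
        1 - (t * p - (p - 1) * (r / (r + s))) := by
      field_simp
      ring
    rw [key]
    obtain ⟨hg1, hg2⟩ := hγ1
    exact ⟨by linarith, by linarith⟩
  -- the two main inequalities
  have hXineq := main_L (u := t) hA hC hα hrα1 hp' hγ1 hCA
  have hYineq := main_L (u := 1 - t) hA hC hα hsα hp' hγ2 hCA
  have hXsharp : A.sharp B r t = A.rpow (r/2) * C.rpow t * A.rpow (r/2) := by
    rw [hCdef]
    rfl
  have hYsharp : A.sharp B s (1 - t) = A.rpow (s/2) * C.rpow (1 - t) * A.rpow (s/2) := by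
    rw [hCdef]
    rfl
  rw [show ((r - (r + s) * t) * p : ℝ) = -(((r + s) * t - r) * p) by ring] at hXineq
  rw [show ((s - (r + s) * (1 - t)) * p : ℝ) = ((r + s) * t - r) * p by ring] at hYineq
  set β : ℝ := ((r + s) * t - r) * p with hβ
  rw [← hXsharp] at hXineq
  rw [← hYsharp] at hYineq
  set X := A.sharp B r t with hX
  set Y := A.sharp B s (1 - t) with hY
  have hYpos : Y.PosDef := by
    rw [hYsharp]
    have := posDef_conj (rpow_posDef hC (1 - t)) (rpow_posDef hA (s/2)).isUnit
    rwa [rpow_herm_ct] at this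
  -- Z := Y^{p/2} A^{-β/2}
  set Z := Y.rpow (p/2) * A.rpow (-(β/2)) with hZ
  have hZc : Zᴴ = A.rpow (-(β/2)) * Y.rpow (p/2) := by
    rw [hZ, Matrix.conjTranspose_mul, rpow_herm_ct, rpow_herm_ct]
  have hZZ : Zᴴ * Z = A.rpow (-(β/2)) * Y.rpow p * A.rpow (-(β/2)) := by
    rw [hZc, hZ]
    have hre : A.rpow (-(β/2)) * Y.rpow (p/2) * (Y.rpow (p/2) * A.rpow (-(β/2))) =
        A.rpow (-(β/2)) * (Y.rpow (p/2) * Y.rpow (p/2)) * A.rpow (-(β/2)) := by noncomm_ring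
    rw [hre, rpcol' hYpos, show (p/2 + p/2 : ℝ) = p by ring]
  have h9 := loe_conj_rpow (A := A) hYineq (-(β/2))
  have eR9 : A.rpow (-(β/2)) * A.rpow β * A.rpow (-(β/2)) = 1 := by
    rw [rpcol' hA, rpcol' hA, show (-(β/2) + β + -(β/2) : ℝ) = 0 by ring, rpow_zero hA]
  rw [eR9, ← hZZ] at h9
  have h10 := loe_comm h9
  have hZZc : Z * Zᴴ = Y.rpow (p/2) * A.rpow (-β) * Y.rpow (p/2) := by
    rw [hZc, hZ]
    have hre : Y.rpow (p/2) * A.rpow (-(β/2)) * (A.rpow (-(β/2)) * Y.rpow (p/2)) =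
        Y.rpow (p/2) * (A.rpow (-(β/2)) * A.rpow (-(β/2))) * Y.rpow (p/2) := by noncomm_ring
    rw [hre, rpcol' hA, show (-(β/2) + -(β/2) : ℝ) = -β by ring]
  rw [hZZc] at h10
  have h11 := loe_conj hXineq (Y.rpow (p/2))
  rw [rpow_herm_ct] at h11
  exact loe_trans h11 h10
end

section
/- Let A, B, and C be n×n positive definite complex matrices such that C ≥ A + B in the Loewner order. Then for every j = 1, 2, …, n, the j-th largest singular value of C + A^{1/2}B^{1/2} + B^{1/2}A^{1/2} is at most the j-th largest singular value of C + A♯B + A♮♮B. -/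
open Matrix Filter ComplexOrder

variable {n : ℕ}

section AuxSec
open Finset Polynomial
namespace Aux
variable {A B : Matrix (Fin n) (Fin n) ℂ}

variable {A : Matrix (Fin n) (Fin n) ℂ}

lemma diag_herm (f : ℝ → ℝ) (ev : Fin n → ℝ) :
    (diagonal (RCLike.ofReal ∘ f ∘ ev) : Matrix (Fin n) (Fin n) ℂ).IsHermitian :=
  isHermitian_diagonal_of_self_adjoint _ (by
    funext i
    simp [Pi.star_apply, Function.comp, RCLike.star_def, Complex.conj_ofReal])

lemma cfc_herm (hA : A.IsHermitian) (f : ℝ → ℝ) : (hA.cfc f).IsHermitian := by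
  rw [Matrix.IsHermitian.cfc, Unitary.conjStarAlgAut_apply, Matrix.star_eq_conjTranspose]
  exact isHermitian_mul_mul_conjTranspose _ (diag_herm f hA.eigenvalues)

lemma cfc_mul_cfc (hA : A.IsHermitian) (f g : ℝ → ℝ) :
    hA.cfc f * hA.cfc g = hA.cfc (fun x => f x * g x) := by
  have hU : (star (hA.eigenvectorUnitary : Matrix (Fin n) (Fin n) ℂ)) *
      (hA.eigenvectorUnitary : Matrix (Fin n) (Fin n) ℂ) = 1 :=
    Matrix.mem_unitaryGroup_iff'.mp hA.eigenvectorUnitary.2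
  simp only [Matrix.IsHermitian.cfc, Unitary.conjStarAlgAut_apply]
  rw [show ∀ (P Q D E : Matrix (Fin n) (Fin n) ℂ), P * D * Q * (P * E * Q) = P * (D * (Q * P) * E) * Q
      by intros; noncomm_ring, hU, mul_one, diagonal_mul_diagonal]
  have : (fun i => (RCLike.ofReal ∘ f ∘ hA.eigenvalues) i * (RCLike.ofReal ∘ g ∘ hA.eigenvalues) i)
      = (RCLike.ofReal ∘ (fun x => f x * g x) ∘ hA.eigenvalues : Fin n → ℂ) := by
    funext i; simp [Function.comp]
  rw [this]

lemma cfc_congr_ev (hA : A.IsHermitian) {f g : ℝ → ℝ}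
    (h : ∀ i, f (hA.eigenvalues i) = g (hA.eigenvalues i)) : hA.cfc f = hA.cfc g := by
  unfold Matrix.IsHermitian.cfc
  have : (RCLike.ofReal ∘ f ∘ hA.eigenvalues : Fin n → ℂ) = RCLike.ofReal ∘ g ∘ hA.eigenvalues := by
    funext i; simp [Function.comp, h i]
  rw [this]

lemma cfc_id' (hA : A.IsHermitian) : hA.cfc (fun x => x) = A := by
  unfold Matrix.IsHermitian.cfc
  exact hA.spectral_theorem.symm

lemma cfc_one' (hA : A.IsHermitian) : hA.cfc (fun _ => 1) = 1 := by
  unfold Matrix.IsHermitian.cfc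
  have hU : (hA.eigenvectorUnitary : Matrix (Fin n) (Fin n) ℂ) *
      (star (hA.eigenvectorUnitary : Matrix (Fin n) (Fin n) ℂ)) = 1 :=
    Matrix.mem_unitaryGroup_iff.mp hA.eigenvectorUnitary.2
  have : (diagonal (RCLike.ofReal ∘ (fun _ : ℝ => (1:ℝ)) ∘ hA.eigenvalues) : Matrix (Fin n) (Fin n) ℂ) = 1 := by
    rw [← diagonal_one]
    congr 1
  rw [this, Unitary.conjStarAlgAut_apply, mul_one, hU]

-- PosDef conjugation
lemma posDef_conj {M U : Matrix (Fin n) (Fin n) ℂ} (hM : M.PosDef) (hU : IsUnit U) :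
    (U * M * Uᴴ).PosDef := by
  refine Matrix.PosDef.of_dotProduct_mulVec_pos (isHermitian_mul_mul_conjTranspose _ hM.1) fun x hx => ?_
  have hx' : Uᴴ *ᵥ x ≠ 0 := by
    have : Function.Injective (Uᴴ.mulVec) :=
      Matrix.mulVec_injective_iff_isUnit.mpr (by rw [← Matrix.star_eq_conjTranspose]; exact hU.star)
    intro h
    exact hx (by simpa using this (h.trans (Matrix.mulVec_zero Uᴴ).symm))
  have := hM.dotProduct_mulVec_pos hx'
  simpa [Matrix.star_mulVec, Matrix.mulVec_mulVec, Matrix.dotProduct_mulVec, mul_assoc,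
    Matrix.star_eq_conjTranspose] using this

lemma cfc_posDef (hA : A.IsHermitian) (f : ℝ → ℝ) (h : ∀ i, 0 < f (hA.eigenvalues i)) :
    (hA.cfc f).PosDef := by
  rw [Matrix.IsHermitian.cfc, Unitary.conjStarAlgAut_apply, Matrix.star_eq_conjTranspose]
  refine posDef_conj (Matrix.PosDef.diagonal fun i => ?_) ?_
  · simp only [Function.comp_apply]
    exact RCLike.ofReal_pos.mpr (h i)
  · exact (Unitary.toUnits hA.eigenvectorUnitary).isUnit
lemma rpow_eq (hA : A.IsHermitian) (r : ℝ) : A.rpow r = hA.cfc (fun x => x ^ r) := hA.cfc_eq _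

lemma rpow_posDef (hA : A.PosDef) (r : ℝ) : (A.rpow r).PosDef := by
  rw [rpow_eq hA.1]
  exact cfc_posDef hA.1 _ fun i => Real.rpow_pos_of_pos (hA.eigenvalues_pos i) r

lemma rpow_herm (hA : A.PosDef) (r : ℝ) : (A.rpow r).IsHermitian := (rpow_posDef hA r).1

lemma rpow_add (hA : A.PosDef) (r s : ℝ) : A.rpow r * A.rpow s = A.rpow (r + s) := by
  rw [rpow_eq hA.1, rpow_eq hA.1, rpow_eq hA.1, cfc_mul_cfc]
  exact cfc_congr_ev hA.1 fun i => (Real.rpow_add (hA.eigenvalues_pos i) r s).symm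

lemma rpow_one' (hA : A.PosDef) : A.rpow 1 = A := by
  rw [rpow_eq hA.1, cfc_congr_ev hA.1 (g := fun x => x) fun i => Real.rpow_one _, cfc_id']

lemma rpow_zero' (hA : A.PosDef) : A.rpow 0 = 1 := by
  rw [rpow_eq hA.1, cfc_congr_ev hA.1 (g := fun _ => (1:ℝ)) fun i => Real.rpow_zero _, cfc_one']

lemma rpow_half_mul (hA : A.PosDef) : A.rpow (1/2) * A.rpow (1/2) = A := by
  rw [rpow_add hA]; norm_num [rpow_one' hA]


lemma rpow_cancel (hA : A.PosDef) (r : ℝ) : A.rpow r * A.rpow (-r) = 1 := by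
  rw [rpow_add hA, add_neg_cancel, rpow_zero' hA]

lemma inner_posDef (hA : A.PosDef) (hB : B.PosDef) :
    (A.rpow (-(1/2)) * B * A.rpow (-(1/2))).PosDef := by
  have := posDef_conj hB (rpow_posDef hA (-(1/2))).isUnit
  rwa [(rpow_herm hA (-(1/2))).eq] at this

lemma sharp_eq (hA : A.PosDef) (hB : B.PosDef) :
    A.sharp B 1 (1/2) = A.rpow (1/2) * (A.rpow (-(1/2)) * B * A.rpow (-(1/2))).rpow (1/2)
      * A.rpow (1/2) := rfl

lemma sharp_posDef (hA : A.PosDef) (hB : B.PosDef) : (A.sharp B 1 (1/2)).PosDef := by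
  have h1 : ((A.rpow (-(1/2)) * B * A.rpow (-(1/2))).rpow (1/2)).PosDef :=
    rpow_posDef (inner_posDef hA hB) _
  have := posDef_conj h1 (rpow_posDef hA (1/2)).isUnit
  rwa [(rpow_herm hA (1/2)).eq, ← sharp_eq hA hB] at this

lemma sharp_mul_sharp (hA : A.PosDef) (hB : B.PosDef) :
    (A.sharp B 1 (1/2)) * A.rpow (-1) * (A.sharp B 1 (1/2)) = B := by
  set R := A.rpow (1/2) with hR
  set Ri := A.rpow (-(1/2)) with hRi
  have hRRi : R * Ri = 1 := rpow_cancel hA (1/2)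
  have hRiR : Ri * R = 1 := by
    have := rpow_cancel hA (-(1/2)); rwa [neg_neg] at this
  have hRA : R * A.rpow (-1) * R = 1 := by
    rw [hR, rpow_add hA, show (1/2 + -1 : ℝ) = -(1/2) by norm_num, ← hRi, hRiR]
  set M := (Ri * B * Ri).rpow (1/2) with hM
  have hP : (Ri * B * Ri).PosDef := inner_posDef hA hB
  have hMM : M * M = Ri * B * Ri := by
    rw [hM, rpow_add hP, show (1/2 + 1/2 : ℝ) = 1 by norm_num, rpow_one' hP]
  have hsharp : A.sharp B 1 (1/2) = R * M * R := rfl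
  rw [hsharp]
  calc R * M * R * A.rpow (-1) * (R * M * R)
      = R * M * (R * A.rpow (-1) * R) * M * R := by noncomm_ring
    _ = R * (M * M) * R := by rw [hRA]; noncomm_ring
    _ = (R * Ri) * B * (Ri * R) := by rw [hMM]; noncomm_ring
    _ = B := by rw [hRRi, hRiR, one_mul, mul_one]

lemma natnat_eq (hA : A.PosDef) (hB : B.PosDef) :
    A.natnat B = (A.rpow (1/2) * B.rpow (1/2)) * (A.sharp B 1 (1/2))⁻¹
      * (B.rpow (1/2) * A.rpow (1/2)) := by
  set G := A.sharp B 1 (1/2) with hG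
  have hGpd : G.PosDef := sharp_posDef hA hB
  have hGunit : IsUnit G.det := hGpd.det_pos.ne'.isUnit
  have hGG : G * G⁻¹ = 1 := Matrix.mul_nonsing_inv G hGunit
  have hGiG : G⁻¹ * G = 1 := Matrix.nonsing_inv_mul G hGunit
  set Rb := B.rpow (1/2) with hRb
  have hRbRb : Rb * Rb = B := rpow_half_mul hB
  -- G⁻¹ * B * G⁻¹ = A.rpow (-1)
  have hkey : G⁻¹ * B * G⁻¹ = A.rpow (-1) := by
    have h1 : G * A.rpow (-1) * G = B := sharp_mul_sharp hA hB
    calc G⁻¹ * B * G⁻¹ = G⁻¹ * (G * A.rpow (-1) * G) * G⁻¹ := by rw [h1]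
      _ = (G⁻¹ * G) * A.rpow (-1) * (G * G⁻¹) := by noncomm_ring
      _ = A.rpow (-1) := by rw [hGiG, hGG, one_mul, mul_one]
  -- the (1/2)-power inside natnat equals Rb * G⁻¹ * Rb
  have hGi : G⁻¹.PosDef := hGpd.inv
  have hW : (Rb * A.rpow (-1) * Rb).rpow (1/2) = Rb * G⁻¹ * Rb := by
    have hPpd : (Rb * A.rpow (-1) * Rb).PosDef := by
      have := posDef_conj (rpow_posDef hA (-1)) (rpow_posDef hB (1/2)).isUnit
      rwa [(rpow_herm hB (1/2)).eq, ← hRb] at this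
    have hWpd : ((Rb * A.rpow (-1) * Rb).rpow (1/2)).PosDef := rpow_posDef hPpd _
    have hQpd : (Rb * G⁻¹ * Rb).PosDef := by
      have := posDef_conj hGi (rpow_posDef hB (1/2)).isUnit
      rwa [(rpow_herm hB (1/2)).eq, ← hRb] at this
    open scoped MatrixOrder in refine (CFC.sq_eq_sq_iff _ _ hWpd.posSemidef.nonneg hQpd.posSemidef.nonneg).mp ?_
    have hWsq : (Rb * A.rpow (-1) * Rb).rpow (1/2) * (Rb * A.rpow (-1) * Rb).rpow (1/2)
        = Rb * A.rpow (-1) * Rb := rpow_half_mul hPpd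
    rw [pow_two, pow_two, hWsq]
    calc Rb * A.rpow (-1) * Rb = Rb * (G⁻¹ * B * G⁻¹) * Rb := by rw [hkey]
      _ = Rb * G⁻¹ * (Rb * Rb) * G⁻¹ * Rb := by rw [hRbRb]; noncomm_ring
      _ = Rb * G⁻¹ * Rb * (Rb * G⁻¹ * Rb) := by noncomm_ring
  rw [Matrix.natnat, ← hRb, hW]
  noncomm_ring



/-! ### dot product helpers -/

lemma sum_dotProduct' {ι : Type*} (s : Finset ι) (f : ι → (Fin n → ℂ)) (y : Fin n → ℂ) :
    (∑ i ∈ s, f i) ⬝ᵥ y = ∑ i ∈ s, f i ⬝ᵥ y := by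
  simp only [dotProduct, Finset.sum_apply, Finset.sum_mul]
  exact Finset.sum_comm

lemma dotProduct_sum' {ι : Type*} (s : Finset ι) (y : Fin n → ℂ) (f : ι → (Fin n → ℂ)) :
    y ⬝ᵥ (∑ i ∈ s, f i) = ∑ i ∈ s, y ⬝ᵥ f i := by
  simp only [dotProduct, Finset.sum_apply, Finset.mul_sum]
  exact Finset.sum_comm

/-! ### coercion helpers for EuclideanSpace -/

lemma coe_sum {ι : Type*} (s : Finset ι) (f : ι → EuclideanSpace ℂ (Fin n)) :
    (⇑(∑ i ∈ s, f i) : Fin n → ℂ) = ∑ i ∈ s, ⇑(f i) := by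
  induction s using Finset.cons_induction with
  | empty => rfl
  | cons a s ha ih => rw [Finset.sum_cons, Finset.sum_cons, ← ih]; rfl

variable {M : Matrix (Fin n) (Fin n) ℂ}

lemma coe_repr_sum (hM : M.IsHermitian) (x : EuclideanSpace ℂ (Fin n)) :
    (⇑x : Fin n → ℂ)
      = ∑ j, hM.eigenvectorBasis.repr x j • (⇑(hM.eigenvectorBasis j) : Fin n → ℂ) := by
  conv_lhs => rw [← hM.eigenvectorBasis.sum_repr x, coe_sum]
  exact Finset.sum_congr rfl fun j _ => rfl

lemma ortho_dot (hM : M.IsHermitian) (i j : Fin n) :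
    star (⇑(hM.eigenvectorBasis i) : Fin n → ℂ) ⬝ᵥ ⇑(hM.eigenvectorBasis j)
      = if i = j then 1 else 0 := by
  have := orthonormal_iff_ite.mp hM.eigenvectorBasis.orthonormal i j
  rwa [EuclideanSpace.inner_eq_star_dotProduct, dotProduct_comm] at this

lemma mulVec_coe (hM : M.IsHermitian) (x : EuclideanSpace ℂ (Fin n)) :
    M *ᵥ ⇑x = ∑ j, (hM.eigenvectorBasis.repr x j * hM.eigenvalues j) • ⇑(hM.eigenvectorBasis j) := by
  conv_lhs => rw [coe_repr_sum hM x]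
  rw [← Matrix.mulVecLin_apply, map_sum]
  refine Finset.sum_congr rfl fun j _ => ?_
  rw [_root_.map_smul, Matrix.mulVecLin_apply, hM.mulVec_eigenvectorBasis]
  funext i
  simp [Pi.smul_apply, smul_eq_mul, Complex.real_smul]
  ring

lemma star_coe (hM : M.IsHermitian) (x : EuclideanSpace ℂ (Fin n)) :
    star (⇑x : Fin n → ℂ)
      = ∑ j, star (hM.eigenvectorBasis.repr x j) • star (⇑(hM.eigenvectorBasis j) : Fin n → ℂ) := by
  conv_lhs => rw [coe_repr_sum hM x]
  rw [star_sum]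
  refine Finset.sum_congr rfl fun j _ => ?_
  rw [star_smul]

lemma dot_self_eq (hM : M.IsHermitian) (x : EuclideanSpace ℂ (Fin n)) :
    star (⇑x : Fin n → ℂ) ⬝ᵥ ⇑x
      = ∑ j, (Complex.normSq (hM.eigenvectorBasis.repr x j) : ℂ) := by
  conv_lhs => rw [star_coe hM x]
  conv_lhs => rw [coe_repr_sum hM x]
  rw [sum_dotProduct']
  refine Finset.sum_congr rfl fun i _ => ?_
  rw [dotProduct_sum']
  rw [Finset.sum_eq_single i]
  · rw [smul_dotProduct, dotProduct_smul, ortho_dot hM, if_pos rfl]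
    simp only [smul_eq_mul, mul_one, Complex.normSq_eq_conj_mul_self, RCLike.star_def]
  · intro j _ hji
    rw [smul_dotProduct, dotProduct_smul, ortho_dot hM, if_neg (Ne.symm hji)]
    simp
  · simp

lemma dot_mulVec_eq (hM : M.IsHermitian) (x : EuclideanSpace ℂ (Fin n)) :
    star (⇑x : Fin n → ℂ) ⬝ᵥ (M *ᵥ ⇑x)
      = ∑ j, (hM.eigenvalues j * Complex.normSq (hM.eigenvectorBasis.repr x j) : ℂ) := by
  conv_lhs => rw [star_coe hM x, mulVec_coe hM x, sum_dotProduct']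
  refine Finset.sum_congr rfl fun i _ => ?_
  rw [dotProduct_sum']
  rw [Finset.sum_eq_single i]
  · rw [smul_dotProduct, dotProduct_smul, ortho_dot hM, if_pos rfl]
    simp only [smul_eq_mul, mul_one, Complex.normSq_eq_conj_mul_self, RCLike.star_def]
    ring
  · intro j _ hji
    rw [smul_dotProduct, dotProduct_smul, ortho_dot hM, if_neg (Ne.symm hji)]
    simp
  · simp

/-! ### spans of eigenvectors -/

lemma repr_eq_zero_of_span (hM : M.IsHermitian) (S : Finset (Fin n))
    {x : EuclideanSpace ℂ (Fin n)}
    (hx : x ∈ Submodule.span ℂ (Set.range (fun i : S => hM.eigenvectorBasis i)))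
    {i : Fin n} (hi : i ∉ S) : hM.eigenvectorBasis.repr x i = 0 := by
  rw [hM.eigenvectorBasis.repr_apply_apply]
  have hker : Submodule.span ℂ (Set.range (fun j : S => hM.eigenvectorBasis j))
      ≤ LinearMap.ker (innerSL ℂ (hM.eigenvectorBasis i)).toLinearMap := by
    rw [Submodule.span_le]
    rintro _ ⟨j, rfl⟩
    simp only [SetLike.mem_coe, LinearMap.mem_ker, ContinuousLinearMap.coe_coe, innerSL_apply_apply]
    exact hM.eigenvectorBasis.orthonormal.2 (fun h => hi (h ▸ j.2))
  simpa using hker hx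

lemma finrank_span_eigen (hM : M.IsHermitian) (S : Finset (Fin n)) :
    Module.finrank ℂ (Submodule.span ℂ
      (Set.range (fun i : S => hM.eigenvectorBasis i))) = S.card := by
  have li : LinearIndependent ℂ (fun i : S => hM.eigenvectorBasis i) :=
    (hM.eigenvectorBasis.orthonormal.linearIndependent).comp
      (Subtype.val : S → Fin n) Subtype.val_injective
  rw [finrank_span_eq_card li]
  exact Fintype.card_coe S

lemma exists_nonzero_inf (V W : Submodule ℂ (EuclideanSpace ℂ (Fin n)))
    (h : n < Module.finrank ℂ V + Module.finrank ℂ W) :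
    ∃ x : EuclideanSpace ℂ (Fin n), x ∈ V ⊓ W ∧ x ≠ 0 := by
  have h1 : Module.finrank ℂ ↥(V ⊔ W) + Module.finrank ℂ ↥(V ⊓ W)
      = Module.finrank ℂ V + Module.finrank ℂ W :=
    Submodule.finrank_sup_add_finrank_inf_eq V W
  have h2 : Module.finrank ℂ ↥(V ⊔ W) ≤ n := by
    simpa using Submodule.finrank_le (V ⊔ W)
  have h3 : 0 < Module.finrank ℂ ↥(V ⊓ W) := by omega
  have h4 : V ⊓ W ≠ ⊥ := by
    intro hbot
    rw [hbot, finrank_bot] at h3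
    omega
  obtain ⟨x, hx, hx0⟩ := Submodule.exists_mem_ne_zero_of_ne_bot h4
  exact ⟨x, hx, hx0⟩

/-! ### Weyl monotonicity -/

lemma weyl {X Y : Matrix (Fin n) (Fin n) ℂ} (hX : X.IsHermitian) (hY : Y.IsHermitian)
    (hXY : (Y - X).PosSemidef) (k : Fin n) :
    (hX.eigenvalues ∘ Tuple.sort hX.eigenvalues) k
      ≤ (hY.eigenvalues ∘ Tuple.sort hY.eigenvalues) k := by
  classical
  set σ := Tuple.sort hX.eigenvalues
  set τ := Tuple.sort hY.eigenvalues
  set S : Finset (Fin n) := (Finset.Ici k).image σ with hS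
  set T : Finset (Fin n) := (Finset.Iic k).image τ with hT
  have hcardS : S.card = n - k := by
    rw [hS, Finset.card_image_of_injective _ σ.injective, Fin.card_Ici]
  have hcardT : T.card = k + 1 := by
    rw [hT, Finset.card_image_of_injective _ τ.injective, Fin.card_Iic]
  set V := Submodule.span ℂ (Set.range (fun i : S => hX.eigenvectorBasis i))
  set W := Submodule.span ℂ (Set.range (fun i : T => hY.eigenvectorBasis i))
  obtain ⟨x, hxVW, hx0⟩ := exists_nonzero_inf V W (by
    rw [finrank_span_eigen, finrank_span_eigen, hcardS, hcardT]
    have := k.2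
    omega)
  -- positivity of the norm-square
  have hd : 0 < ∑ j, Complex.normSq (hX.eigenvectorBasis.repr x j) := by
    obtain ⟨i, hi⟩ : ∃ i, hX.eigenvectorBasis.repr x i ≠ 0 := by
      by_contra h
      push_neg at h
      apply hx0
      have h0 : hX.eigenvectorBasis.repr x = 0 := by
        ext i; simpa using h i
      simpa using hX.eigenvectorBasis.repr.map_eq_zero_iff.mp h0
    exact Finset.sum_pos' (fun j _ => Complex.normSq_nonneg _)
      ⟨i, Finset.mem_univ i, Complex.normSq_pos.mpr hi⟩
  -- the two norm-squares agree
  have hnorm : ∑ j, Complex.normSq (hX.eigenvectorBasis.repr x j)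
      = ∑ j, Complex.normSq (hY.eigenvectorBasis.repr x j) := by
    have h1 := dot_self_eq hX x
    have h2 := dot_self_eq hY x
    have h3 := h1.symm.trans h2
    exact_mod_cast congrArg Complex.re h3
  -- lower bound for X
  have hXbound : (hX.eigenvalues ∘ σ) k * ∑ j, Complex.normSq (hX.eigenvectorBasis.repr x j)
      ≤ (star (⇑x : Fin n → ℂ) ⬝ᵥ (X *ᵥ ⇑x)).re := by
    have h5 := dot_mulVec_eq hX x
    have hre : (star (⇑x : Fin n → ℂ) ⬝ᵥ (X *ᵥ ⇑x)).re
        = ∑ j, hX.eigenvalues j * Complex.normSq (hX.eigenvectorBasis.repr x j) := by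
      rw [h5]; push_cast; simp
    rw [hre, Finset.mul_sum]
    refine Finset.sum_le_sum fun j _ => ?_
    by_cases hj : j ∈ S
    · obtain ⟨i, hik, rfl⟩ := Finset.mem_image.mp hj
      have h6 : (hX.eigenvalues ∘ σ) k ≤ (hX.eigenvalues ∘ σ) i :=
        Tuple.monotone_sort hX.eigenvalues (Finset.mem_Ici.mp hik)
      exact mul_le_mul_of_nonneg_right h6 (Complex.normSq_nonneg _)
    · rw [repr_eq_zero_of_span hX S hxVW.1 hj]
      simp
  -- upper bound for Y
  have hYbound : (star (⇑x : Fin n → ℂ) ⬝ᵥ (Y *ᵥ ⇑x)).re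
      ≤ (hY.eigenvalues ∘ τ) k * ∑ j, Complex.normSq (hX.eigenvectorBasis.repr x j) := by
    have h5 := dot_mulVec_eq hY x
    have hre : (star (⇑x : Fin n → ℂ) ⬝ᵥ (Y *ᵥ ⇑x)).re
        = ∑ j, hY.eigenvalues j * Complex.normSq (hY.eigenvectorBasis.repr x j) := by
      rw [h5]; push_cast; simp
    rw [hre, hnorm, Finset.mul_sum]
    refine Finset.sum_le_sum fun j _ => ?_
    by_cases hj : j ∈ T
    · obtain ⟨i, hik, rfl⟩ := Finset.mem_image.mp hj
      have h6 : (hY.eigenvalues ∘ τ) i ≤ (hY.eigenvalues ∘ τ) k :=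
        Tuple.monotone_sort hY.eigenvalues (Finset.mem_Iic.mp hik)
      exact mul_le_mul_of_nonneg_right h6 (Complex.normSq_nonneg _)
    · rw [repr_eq_zero_of_span hY T hxVW.2 hj]
      simp
  -- middle inequality
  have hmid : (star (⇑x : Fin n → ℂ) ⬝ᵥ (X *ᵥ ⇑x)).re
      ≤ (star (⇑x : Fin n → ℂ) ⬝ᵥ (Y *ᵥ ⇑x)).re := by
    have h0 := hXY.re_dotProduct_nonneg (⇑x : Fin n → ℂ)
    rw [Matrix.sub_mulVec, dotProduct_sub] at h0
    simp only [Complex.sub_re, RCLike.re_to_complex] at h0 ⊢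
    linarith [h0]
  have := le_trans (le_trans hXbound hmid) hYbound
  exact le_of_mul_le_mul_right this hd

lemma charpoly_conj_units {U V N : Matrix (Fin n) (Fin n) ℂ} (hUV : U * V = 1)
    (hVU : V * U = 1) : (U * N * V).charpoly = N.charpoly := by
  classical
  unfold Matrix.charpoly
  set f : Matrix (Fin n) (Fin n) ℂ →+* Matrix (Fin n) (Fin n) ℂ[X] := (Polynomial.C : ℂ →+* ℂ[X]).mapMatrix with hf
  have key : charmatrix (U * N * V) = f U * charmatrix N * f V := by
    unfold charmatrix
    rw [mul_sub, sub_mul]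
    congr 1
    · have h1 : f U * Matrix.scalar (Fin n) (X : ℂ[X]) = Matrix.scalar (Fin n) (X : ℂ[X]) * f U :=
        ((Matrix.scalar_commute (X : ℂ[X]) (fun r => Commute.all _ _) (f U)).symm).eq
      rw [h1, mul_assoc, ← _root_.map_mul, hUV, _root_.map_one, mul_one]
    · rw [← _root_.map_mul, ← _root_.map_mul]
  rw [key, det_mul, det_mul]
  have hdet : (f U).det * (f V).det = 1 := by
    rw [← det_mul, ← _root_.map_mul, hUV, _root_.map_one, det_one]
  calc (f U).det * (charmatrix N).det * (f V).det
      = (charmatrix N).det * ((f U).det * (f V).det) := by ring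
    _ = (charmatrix N).det := by rw [hdet, mul_one]

lemma charpoly_diagonal (d : Fin n → ℂ) :
    (diagonal d).charpoly = ∏ i, (X - C (d i)) := by
  rw [Matrix.charpoly_of_upperTriangular _ (Matrix.blockTriangular_diagonal d)]
  exact Finset.prod_congr rfl fun i _ => by rw [diagonal_apply_eq]

lemma roots_charpoly_cfc (hM : M.IsHermitian) (g : ℝ → ℝ) :
    (hM.cfc g).charpoly.roots
      = Multiset.map (fun i => ((g (hM.eigenvalues i) : ℝ) : ℂ)) Finset.univ.val := by
  have hU : (hM.eigenvectorUnitary : Matrix (Fin n) (Fin n) ℂ) *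
      (star (hM.eigenvectorUnitary : Matrix (Fin n) (Fin n) ℂ)) = 1 :=
    Matrix.mem_unitaryGroup_iff.mp hM.eigenvectorUnitary.2
  have hU' : (star (hM.eigenvectorUnitary : Matrix (Fin n) (Fin n) ℂ)) *
      (hM.eigenvectorUnitary : Matrix (Fin n) (Fin n) ℂ) = 1 :=
    Matrix.mem_unitaryGroup_iff'.mp hM.eigenvectorUnitary.2
  rw [Matrix.IsHermitian.cfc, Unitary.conjStarAlgAut_apply, charpoly_conj_units hU hU', charpoly_diagonal]
  have : ∏ i, (X - C ((RCLike.ofReal ∘ g ∘ hM.eigenvalues) i))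
      = ((Finset.univ.val.map (fun i => ((g (hM.eigenvalues i) : ℝ) : ℂ))).map
          (fun a => X - C a)).prod := by
    rw [Multiset.map_map]
    rfl
  rw [this, Polynomial.roots_multiset_prod_X_sub_C]

lemma singVals_psd {M : Matrix (Fin n) (Fin n) ℂ} (hM : M.PosSemidef) :
    M.singVals = Multiset.map hM.1.eigenvalues Finset.univ.val := by
  unfold Matrix.singVals
  have h1 : Mᴴ = M := hM.1
  have h2 : M * M = hM.1.cfc (fun x => x * x) := by
    rw [← cfc_mul_cfc hM.1 (fun x => x) (fun x => x), cfc_id' hM.1]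
  rw [h1, h2, roots_charpoly_cfc]
  rw [Multiset.map_map]
  refine Multiset.map_congr rfl fun i _ => ?_
  simp only [Function.comp_apply, Complex.ofReal_re]
  exact Real.sqrt_mul_self (hM.eigenvalues_nonneg i)

/-! ### sorting -/

lemma sort_map_univ (f : Fin n → ℝ) :
    (Multiset.map f (Finset.univ.val : Multiset (Fin n))).sort (· ≤ ·)
      = List.ofFn (f ∘ Tuple.sort f) := by
  refine List.Perm.eq_of_pairwise' (Multiset.pairwise_sort _ _)
    ((Tuple.monotone_sort f).sortedLE_ofFn.pairwise) ?_
  rw [← Multiset.coe_eq_coe, Multiset.sort_eq]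
  have h1 : ((List.ofFn (f ∘ Tuple.sort f) : List ℝ) : Multiset ℝ)
      = Multiset.map (f ∘ Tuple.sort f) (Finset.univ.val : Multiset (Fin n)) := by
    rw [List.ofFn_eq_map, ← Multiset.map_coe]
    rfl
  have h2 : Multiset.map (⇑(Tuple.sort f)) Finset.univ.val = Finset.univ.val := by
    have h3 : Multiset.map (⇑(Tuple.sort f)) Finset.univ.val
        = (Finset.univ.map (Tuple.sort f).toEmbedding).val := rfl
    rw [h3, Finset.map_univ_equiv]
  rw [h1, ← Multiset.map_map, h2]

lemma kthLargest_map (f : Fin n → ℝ) (j : Fin n) :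
    (Multiset.map f (Finset.univ.val : Multiset (Fin n))).kthLargest n j
      = (f ∘ Tuple.sort f) ⟨n - 1 - (j : ℕ), by have := j.2; omega⟩ := by
  unfold Multiset.kthLargest
  rw [sort_map_univ]
  have hlt : n - 1 - (j : ℕ) < (List.ofFn (f ∘ Tuple.sort f)).length := by
    rw [List.length_ofFn]
    have := j.2; omega
  rw [List.getD_eq_getElem _ _ hlt, List.getElem_ofFn]


/-! ### positive semidefiniteness of the two combinations -/

variable {C : Matrix (Fin n) (Fin n) ℂ}

lemma X_psd (hA : A.PosDef) (hB : B.PosDef) (hCAB : (C - (A + B)).PosSemidef) :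
    (C + A.rpow (1 / 2) * B.rpow (1 / 2) + B.rpow (1 / 2) * A.rpow (1 / 2)).PosSemidef := by
  have hsum : C + A.rpow (1 / 2) * B.rpow (1 / 2) + B.rpow (1 / 2) * A.rpow (1 / 2)
      = (C - (A + B)) + (A.rpow (1 / 2) + B.rpow (1 / 2))ᴴ * (A.rpow (1 / 2) + B.rpow (1 / 2)) := by
    rw [conjTranspose_add, (rpow_herm hA (1/2)).eq, (rpow_herm hB (1/2)).eq, add_mul, mul_add,
      mul_add, rpow_half_mul hA, rpow_half_mul hB]
    noncomm_ring
  rw [hsum]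
  exact hCAB.add (posSemidef_conjTranspose_mul_self _)

lemma YmX_psd (hA : A.PosDef) (hB : B.PosDef) :
    ((C + A.sharp B 1 (1 / 2) + A.natnat B)
      - (C + A.rpow (1 / 2) * B.rpow (1 / 2) + B.rpow (1 / 2) * A.rpow (1 / 2))).PosSemidef := by
  have hGpd : (A.sharp B 1 (1 / 2)).PosDef := sharp_posDef hA hB
  set G := A.sharp B 1 (1 / 2) with hGdef
  set T := A.rpow (1 / 2) * B.rpow (1 / 2) with hT
  have hTH : Tᴴ = B.rpow (1 / 2) * A.rpow (1 / 2) := by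
    rw [hT, conjTranspose_mul, (rpow_herm hA _).eq, (rpow_herm hB _).eq]
  have hGunit : IsUnit G.det := hGpd.det_pos.ne'.isUnit
  have hGG : G * G⁻¹ = 1 := Matrix.mul_nonsing_inv G hGunit
  have hGiG : G⁻¹ * G = 1 := Matrix.nonsing_inv_mul G hGunit
  have hN : A.natnat B = T * G⁻¹ * Tᴴ := by
    rw [natnat_eq hA hB, hTH]
  have hcalc : (C + G + A.natnat B)
      - (C + T + B.rpow (1 / 2) * A.rpow (1 / 2)) = (T - G) * G⁻¹ * (T - G)ᴴ := by
    rw [hN, ← hTH]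
    have hexp : (T - G) * G⁻¹ * (T - G)ᴴ
        = T * G⁻¹ * Tᴴ - T * (G⁻¹ * G) - (G * G⁻¹) * Tᴴ + (G * G⁻¹) * G := by
      rw [conjTranspose_sub, hGpd.1.eq]
      noncomm_ring
    rw [hexp, hGG, hGiG, mul_one, one_mul, one_mul]
    noncomm_ring
  rw [hcalc]
  exact Matrix.PosSemidef.mul_mul_conjTranspose_same hGpd.inv.posSemidef (T - G)

end Aux
end AuxSec

/-- Theorem 4.1: for positive definite `A, B, C` with `C ≥ A + B` in the Loewner order, for
every `j = 1, ..., n` (here `j : Fin n`, `0`-indexed) the `j`-th largest singular value of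
`C + A^{1/2}B^{1/2} + B^{1/2}A^{1/2}` is at most the `j`-th largest singular value of
`C + A♯B + A♮♮B`. -/
theorem stmt_14 (A B C : Matrix (Fin n) (Fin n) ℂ)
    (hA : A.PosDef) (hB : B.PosDef) (hC : C.PosDef)
    (hCAB : (C - (A + B)).PosSemidef) :
    ∀ j : Fin n,
      (Matrix.singVals (C + A.rpow (1 / 2) * B.rpow (1 / 2) +
          B.rpow (1 / 2) * A.rpow (1 / 2))).kthLargest n j ≤
      (Matrix.singVals (C + A.sharp B 1 (1 / 2) + A.natnat B)).kthLargest n j := by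
  intro j
  have hX : (C + A.rpow (1 / 2) * B.rpow (1 / 2) + B.rpow (1 / 2) * A.rpow (1 / 2)).PosSemidef :=
    Aux.X_psd hA hB hCAB
  have hYmX := Aux.YmX_psd (C := C) hA hB
  have hY : (C + A.sharp B 1 (1 / 2) + A.natnat B).PosSemidef := by
    have h := hX.add hYmX
    rwa [add_sub_cancel] at h
  rw [Aux.singVals_psd hX, Aux.singVals_psd hY, Aux.kthLargest_map, Aux.kthLargest_map]
  exact Aux.weyl hX.1 hY.1 hYmX ⟨n - 1 - (j : ℕ), by have := j.2; omega⟩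
end

section
/- Let A and B be n×n positive definite complex matrices. Then Tr(A + B + A♯B + A♮♮B) ≤ Tr(A + B + 2(A♮♮B)); that is, Tr(A♯B) ≤ Tr(A♮♮B). (This is the Schatten 1-norm case of the inequality ||A + B + A♯B + A♮♮B||_p ≤ ||A + B + 2(A♮♮B)||_p, since all matrices involved are positive definite.) -/
open Matrix Filter ComplexOrder

variable {n : ℕ}

/-! With `C = B^{1/2}` and `X = C A⁻¹ C` one has `A♯B = C X^{-1/2} C` (by uniqueness of positive
square roots) and `A = C X⁻¹ C`, so `Tr(A♯B) = Tr(C X^{-1/2} C)` and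
`Tr(A♮♮B) = Tr(A X^{1/2}) = Tr(C X⁻¹ C X^{1/2})`. For `N = C X^{-1/4}` and
`M = X^{-1/2} C X^{1/4}` these traces are `‖N‖₂²` and `‖M‖₂²`, while `⟨M, N⟩ = ‖N‖₂²`; hence
`‖M‖₂² - ‖N‖₂² = ‖M - N‖₂² ≥ 0`. -/

namespace Matrix

variable {A B X : Matrix (Fin n) (Fin n) ℂ}

lemma isHermitian_rpow (A : Matrix (Fin n) (Fin n) ℂ) (r : ℝ) : (A.rpow r).IsHermitian :=
  cfc_predicate (fun x : ℝ => x ^ r) A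

lemma rpow_one (hA : A.IsHermitian) : A.rpow 1 = A := by
  simpa [Matrix.rpow] using cfc_id' ℝ A hA.isSelfAdjoint

lemma rpow_zero (hA : A.IsHermitian) : A.rpow 0 = 1 := by
  simpa [Matrix.rpow] using cfc_const_one ℝ A (ha := hA.isSelfAdjoint)

lemma rpow_mul_rpow (hA : A.PosDef) (r s : ℝ) : A.rpow r * A.rpow s = A.rpow (r + s) := by
  have hcont (f : ℝ → ℝ) : ContinuousOn f (spectrum ℝ A) :=
    (Matrix.finite_real_spectrum (A := A)).continuousOn f
  rw [Matrix.rpow, Matrix.rpow, ← cfc_mul _ _ A (hcont _) (hcont _)]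
  refine cfc_congr fun x hx => (Real.rpow_add ?_ r s).symm
  rw [hA.1.spectrum_real_eq_range_eigenvalues] at hx
  obtain ⟨i, rfl⟩ := hx
  exact hA.eigenvalues_pos i

lemma rpow_half_mul_rpow_half (hA : A.PosDef) (r : ℝ) :
    A.rpow (r / 2) * A.rpow (r / 2) = A.rpow r := by
  rw [rpow_mul_rpow hA, add_halves]

lemma rpow_one_half_mul_self (hA : A.PosDef) : A.rpow (1 / 2) * A.rpow (1 / 2) = A := by
  rw [rpow_mul_rpow hA, add_halves, rpow_one hA.1]

lemma rpow_mul_rpow_neg (hA : A.PosDef) (r : ℝ) : A.rpow r * A.rpow (-r) = 1 := by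
  rw [rpow_mul_rpow hA, add_neg_cancel, rpow_zero hA.1]

lemma rpow_neg_mul_rpow (hA : A.PosDef) (r : ℝ) : A.rpow (-r) * A.rpow r = 1 := by
  rw [rpow_mul_rpow hA, neg_add_cancel, rpow_zero hA.1]

lemma PosDef.hermitian_conj_of_mul_eq_one {C C' : Matrix (Fin n) (Fin n) ℂ} (hA : A.PosDef)
    (hC : C.IsHermitian) (hC' : C' * C = 1) : (C * A * C).PosDef := by
  have hinj : Function.Injective C.mulVec := fun x y hxy => by
    simpa [mulVec_mulVec, hC'] using congrArg (C' *ᵥ ·) hxy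
  simpa only [hC.eq] using hA.conjTranspose_mul_mul_same hinj

lemma PosDef.rpow (hA : A.PosDef) (r : ℝ) : (A.rpow r).PosDef := by
  simpa only [mul_one, rpow_half_mul_rpow_half hA] using
    PosDef.one.hermitian_conj_of_mul_eq_one (isHermitian_rpow A (r / 2))
      (rpow_neg_mul_rpow hA (r / 2))

lemma rpow_neg_one_eq_of_mul_eq_one (hA : A.PosDef) (h : X * A = 1) : A.rpow (-1) = X := by
  calc A.rpow (-1) = X * (A.rpow 1 * A.rpow (-1)) := by
        rw [rpow_one hA.1, ← mul_assoc, h, one_mul]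
    _ = X := by rw [rpow_mul_rpow_neg hA, mul_one]

lemma rpow_half_eq_of_mul_self (hA : A.PosDef) (hX : X.PosSemidef) (h : X * X = A) :
    A.rpow (1 / 2) = X := by
  open scoped MatrixOrder Matrix.Norms.L2Operator in
  refine (CFC.sq_eq_sq_iff _ _ (hA.rpow _).posSemidef.nonneg hX.nonneg).mp ?_
  rw [sq, sq, h, rpow_mul_rpow hA, add_halves, rpow_one hA.1]

lemma rpow_neg_half_mul_self_mul_rpow_neg_half (hA : A.PosDef) :
    A.rpow (-(1 / 2)) * A * A.rpow (-(1 / 2)) = 1 := by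
  nth_rw 2 [← rpow_one hA.1]
  rw [rpow_mul_rpow hA, rpow_mul_rpow hA, show -(1 / 2 : ℝ) + 1 + -(1 / 2) = 0 by norm_num,
    rpow_zero hA.1]

lemma trace_conjTranspose_mul_self_le_of_trace_eq {l m : Type*} [Fintype l] [Fintype m]
    (M N : Matrix l m ℂ) (h : (Mᴴ * N).trace = (Nᴴ * N).trace) :
    (Nᴴ * N).trace ≤ (Mᴴ * M).trace := by
  have hNM : (Nᴴ * M).trace = (Nᴴ * N).trace := by
    calc (Nᴴ * M).trace = star (Mᴴ * N).trace := by
          rw [← trace_conjTranspose, conjTranspose_mul, conjTranspose_conjTranspose]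
      _ = (Nᴴ * N).trace := by
          rw [h, ← trace_conjTranspose, conjTranspose_mul, conjTranspose_conjTranspose]
  have h0 := (posSemidef_conjTranspose_mul_self (M - N)).trace_nonneg
  rw [conjTranspose_sub, Matrix.sub_mul, Matrix.mul_sub, Matrix.mul_sub, trace_sub, trace_sub,
    trace_sub, h, hNM, sub_self, sub_zero] at h0
  exact sub_nonneg.mp h0

lemma trace_mul_rpow_neg_half_mul_le {C : Matrix (Fin n) (Fin n) ℂ} (hC : C.IsHermitian)
    (hX : X.PosDef) :
    (C * X.rpow (-(1 / 2)) * C).trace ≤ (C * X.rpow (-1) * C * X.rpow (1 / 2)).trace := by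
  set q := X.rpow (1 / 4)
  set q' := X.rpow (-(1 / 4))
  have hq'q : q' * q = 1 := rpow_neg_mul_rpow hX _
  have hqq : q * q = X.rpow (1 / 2) := by rw [rpow_mul_rpow hX]; norm_num
  have hq'q' : q' * q' = X.rpow (-(1 / 2)) := by rw [rpow_mul_rpow hX]; norm_num
  have hGG : X.rpow (-(1 / 2)) * X.rpow (-(1 / 2)) = X.rpow (-1) := by
    rw [rpow_mul_rpow hX]; norm_num
  have hN : (C * q')ᴴ = q' * C := by
    rw [conjTranspose_mul, (isHermitian_rpow X _).eq, hC.eq]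
  have hM : (X.rpow (-(1 / 2)) * C * q)ᴴ = q * C * X.rpow (-(1 / 2)) := by
    rw [conjTranspose_mul, conjTranspose_mul, (isHermitian_rpow X _).eq, hC.eq,
      (isHermitian_rpow X _).eq, Matrix.mul_assoc]
  have hNN : ((C * q')ᴴ * (C * q')).trace = (C * X.rpow (-(1 / 2)) * C).trace :=
    calc ((C * q')ᴴ * (C * q')).trace = (C * q' * (q' * C)).trace := by rw [hN, trace_mul_comm]
      _ = (C * (q' * q') * C).trace := by simp only [Matrix.mul_assoc]
      _ = (C * X.rpow (-(1 / 2)) * C).trace := by rw [hq'q']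
  have hMN : ((X.rpow (-(1 / 2)) * C * q)ᴴ * (C * q')).trace
      = (C * X.rpow (-(1 / 2)) * C).trace :=
    calc ((X.rpow (-(1 / 2)) * C * q)ᴴ * (C * q')).trace
        = (q * (C * X.rpow (-(1 / 2)) * C) * q').trace := by
          rw [hM]; simp only [Matrix.mul_assoc]
      _ = (q' * q * (C * X.rpow (-(1 / 2)) * C)).trace := by
          rw [trace_mul_comm, ← Matrix.mul_assoc]
      _ = (C * X.rpow (-(1 / 2)) * C).trace := by rw [hq'q, Matrix.one_mul]
  have hMM : ((X.rpow (-(1 / 2)) * C * q)ᴴ * (X.rpow (-(1 / 2)) * C * q)).trace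
      = (C * X.rpow (-1) * C * X.rpow (1 / 2)).trace :=
    calc ((X.rpow (-(1 / 2)) * C * q)ᴴ * (X.rpow (-(1 / 2)) * C * q)).trace
        = (q * (C * (X.rpow (-(1 / 2)) * X.rpow (-(1 / 2))) * C) * q).trace := by
          rw [hM]; simp only [Matrix.mul_assoc]
      _ = (C * X.rpow (-1) * C * (q * q)).trace := by
          rw [trace_mul_comm, ← Matrix.mul_assoc, trace_mul_comm, hGG]
      _ = (C * X.rpow (-1) * C * X.rpow (1 / 2)).trace := by rw [hqq]
  rw [← hNN, ← hMM]
  exact trace_conjTranspose_mul_self_le_of_trace_eq _ _ (hMN.trans hNN.symm)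

lemma PosDef.rpow_conj_rpow_neg_one (hA : A.PosDef) (hB : B.PosDef) (r : ℝ) :
    (B.rpow r * A.rpow (-1) * B.rpow r).PosDef :=
  (hA.rpow (-1)).hermitian_conj_of_mul_eq_one (isHermitian_rpow B r) (rpow_neg_mul_rpow hB r)

lemma rpow_mul_rpow_conj_rpow_neg_one_mul_rpow (hA : A.PosDef) (hB : B.PosDef) (r : ℝ) :
    B.rpow r * (B.rpow r * A.rpow (-1) * B.rpow r).rpow (-1) * B.rpow r = A := by
  have hinv : (B.rpow (-r) * A * B.rpow (-r)) * (B.rpow r * A.rpow (-1) * B.rpow r) = 1 := by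
    calc _ = B.rpow (-r) * A * (B.rpow (-r) * B.rpow r) * A.rpow (-1) * B.rpow r := by
          simp only [Matrix.mul_assoc]
      _ = B.rpow (-r) * (A.rpow 1 * A.rpow (-1)) * B.rpow r := by
          rw [rpow_neg_mul_rpow hB, Matrix.mul_one, rpow_one hA.1]; simp only [Matrix.mul_assoc]
      _ = 1 := by rw [rpow_mul_rpow_neg hA, Matrix.mul_one, rpow_neg_mul_rpow hB]
  rw [rpow_neg_one_eq_of_mul_eq_one (hA.rpow_conj_rpow_neg_one hB r) hinv]
  calc _ = (B.rpow r * B.rpow (-r)) * A * (B.rpow (-r) * B.rpow r) := by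
        simp only [Matrix.mul_assoc]
    _ = A := by rw [rpow_mul_rpow_neg hB, rpow_neg_mul_rpow hB, Matrix.one_mul, Matrix.mul_one]

lemma sharp_one_half_eq (hA : A.PosDef) (hB : B.PosDef) :
    A.sharp B 1 (1 / 2) = B.rpow (1 / 2) *
      (B.rpow (1 / 2) * A.rpow (-1) * B.rpow (1 / 2)).rpow (-(1 / 2)) * B.rpow (1 / 2) := by
  set C := B.rpow (1 / 2)
  set X := C * A.rpow (-1) * C
  set Y := C * X.rpow (-(1 / 2)) * C
  have hX : X.PosDef := hA.rpow_conj_rpow_neg_one hB _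
  have hY : Y.PosDef := (hX.rpow _).hermitian_conj_of_mul_eq_one (isHermitian_rpow B _)
    (rpow_neg_mul_rpow hB _)
  have hroot : (A.rpow (-(1 / 2)) * B * A.rpow (-(1 / 2))).rpow (1 / 2)
      = A.rpow (-(1 / 2)) * Y * A.rpow (-(1 / 2)) := by
    refine rpow_half_eq_of_mul_self
      (hB.hermitian_conj_of_mul_eq_one (isHermitian_rpow A _) (rpow_mul_rpow_neg hA _))
      (hY.hermitian_conj_of_mul_eq_one (isHermitian_rpow A _)
        (rpow_mul_rpow_neg hA _)).posSemidef ?_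
    calc _ = A.rpow (-(1 / 2)) * C * (X.rpow (-(1 / 2)) *
          (C * (A.rpow (-(1 / 2)) * A.rpow (-(1 / 2))) * C) * X.rpow (-(1 / 2))) * C *
          A.rpow (-(1 / 2)) := by simp only [Y, Matrix.mul_assoc]
      _ = A.rpow (-(1 / 2)) * (C * C) * A.rpow (-(1 / 2)) := by
          rw [rpow_mul_rpow hA, show -(1 / 2 : ℝ) + -(1 / 2) = -1 by norm_num,
            rpow_neg_half_mul_self_mul_rpow_neg_half hX, Matrix.mul_one]
          simp only [Matrix.mul_assoc]
      _ = A.rpow (-(1 / 2)) * B * A.rpow (-(1 / 2)) := by rw [rpow_one_half_mul_self hB]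
  calc A.sharp B 1 (1 / 2) = (A.rpow (1 / 2) * A.rpow (-(1 / 2))) * Y *
        (A.rpow (-(1 / 2)) * A.rpow (1 / 2)) := by
        rw [Matrix.sharp, hroot]; simp only [Matrix.mul_assoc]
    _ = Y := by rw [rpow_mul_rpow_neg hA, rpow_neg_mul_rpow hA, Matrix.one_mul, Matrix.mul_one]

lemma trace_natnat (hA : A.PosDef) (B : Matrix (Fin n) (Fin n) ℂ) :
    (A.natnat B).trace
      = (A * (B.rpow (1 / 2) * A.rpow (-1) * B.rpow (1 / 2)).rpow (1 / 2)).trace := by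
  rw [Matrix.natnat, trace_mul_cycle, rpow_one_half_mul_self hA]

end Matrix

/-- The `p = 1` case of Theorem 4.2: for positive definite `A, B`,
`Tr(A + B + A♯B + A♮♮B) ≤ Tr(A + B + 2(A♮♮B))`, i.e. `Tr(A♯B) ≤ Tr(A♮♮B)`. -/
theorem stmt_16 (A B : Matrix (Fin n) (Fin n) ℂ) (hA : A.PosDef) (hB : B.PosDef) :
    (A + B + A.sharp B 1 (1 / 2) + A.natnat B).trace ≤
      (A + B + 2 • A.natnat B).trace := by
  set C := B.rpow (1 / 2)
  set X := C * A.rpow (-1) * C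
  have hX : X.PosDef := hA.rpow_conj_rpow_neg_one hB _
  have hmeans : (A.sharp B 1 (1 / 2)).trace ≤ (A.natnat B).trace :=
    calc (A.sharp B 1 (1 / 2)).trace = (C * X.rpow (-(1 / 2)) * C).trace := by
          rw [sharp_one_half_eq hA hB]
      _ ≤ (C * X.rpow (-1) * C * X.rpow (1 / 2)).trace :=
          trace_mul_rpow_neg_half_mul_le (isHermitian_rpow B _) hX
      _ = (A.natnat B).trace := by
          rw [rpow_mul_rpow_conj_rpow_neg_one_mul_rpow hA hB, trace_natnat hA]
  simp only [two_smul, trace_add, ← add_assoc]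
  gcongr
end
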